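/- arXiv:math/9902088 — 5 statements merged into one kernel-verified Lean document; each statement's English description precedes it below -/
import Mathlib

section
/- For a partition λ of r, there exists a unique element w in the set of distinguished double coset representatives of S_λ \ S_r / S_{λ'} such that the conjugate w^{-1} S_λ w intersects S_{λ'} trivially, where λ' is the conjugate (dual) partition and S_λ, S_{λ'} are the corresponding Young subgroups. -/
noncomputable section
open scoped Classical
open Finset

/-- Apply a permutation of `Fin r` to a natural number (fixing numbers `≥ r`). -/
def pApp {r : ℕ} (w : Equiv.Perm (Fin r)) (x : ℕ) : ℕ :=
  if h : x < r then (w ⟨x, h⟩ : ℕ) else x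

/-- Block index of position `x` (0-indexed) for the composition `c`. -/
def blockOf (c : List ℕ) (x : ℕ) : ℕ :=
  ((Finset.range c.length).filter (fun i => (c.take (i + 1)).sum ≤ x)).card

/-- Membership in the Young subgroup of the composition `c` of `r`. -/
def inYoung {r : ℕ} (c : List ℕ) (w : Equiv.Perm (Fin r)) : Prop :=
  ∀ x : Fin r, blockOf c (pApp w (x : ℕ)) = blockOf c (x : ℕ)

/-- The number of inversions, i.e. the Coxeter length, of a permutation of `Fin r`. -/
def permLen {r : ℕ} (w : Equiv.Perm (Fin r)) : ℕ :=
  ((Finset.univ : Finset (Fin r × Fin r)).filter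
    (fun p => p.1 < p.2 ∧ w p.2 < w p.1)).card

/-- `w` has minimal length in its double coset `S_c w S_d`
(products are written so that `a · w · b` with the paper's right-action
convention corresponds to `b * w * a` for Lean's left-acting permutations). -/
def IsDistinguished {r : ℕ} (c d : List ℕ) (w : Equiv.Perm (Fin r)) : Prop :=
  ∀ a b : Equiv.Perm (Fin r), inYoung c a → inYoung d b →
    permLen w ≤ permLen (b * w * a)

/-- The conjugate (dual) partition. -/
def conjP (l : List ℕ) : List ℕ :=
  (List.range (l.foldr max 0)).map (fun i => l.countP (fun p => decide (i < p)))

/-- `l` is a partition (weakly decreasing list of positive integers). -/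
def IsPartition (l : List ℕ) : Prop :=
  l.Pairwise (· ≥ ·) ∧ ∀ p ∈ l, 0 < p

/-!
The representative is the permutation `rowToCol` that reads the Young diagram of `λ` row by row
and writes it out column by column.

A permutation `w` is a minimal double coset representative iff it is increasing on every block
of `λ` and `w⁻¹` is increasing on every block of `λ'`: a descent inside a block is removed by an
adjacent transposition, which lowers the length; conversely every inversion `(p, q)` of `w` joins
different blocks on both sides, so `(a⁻¹ p, a⁻¹ q)` is an inversion of `b w a`. Using
transpositions, `w⁻¹ S_{λ'} w ∩ S_λ = 1` iff a position `x` is determined by its `λ`-block (row)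
together with the `λ'`-block of `w x` (column).

For such a `w` the column strictly increases along each row, so it is at least the position of `x`
in its row. Both quantities have the same sum over all `x`, because the columns of `w` and of
`rowToCol` are equidistributed (`w` is a bijection), so they agree. Finally a permutation whose
inverse is increasing on the `λ'`-blocks is determined by the column of each position.
-/

theorem lt_card_filter_range_iff {P : ℕ → Prop} [DecidablePred P]
    (hP : ∀ ⦃i j⦄, i ≤ j → P j → P i) (n i : ℕ) :
    i < #{k ∈ range n | P k} ↔ i < n ∧ P i := by
  by_cases h : i < n ∧ P i
  · have : range (i + 1) ⊆ {k ∈ range n | P k} := fun k hk => by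
      simp only [mem_range, mem_filter] at hk ⊢
      exact ⟨by omega, hP (by omega) h.2⟩
    simpa [h] using card_le_card this
  · have : {k ∈ range n | P k} ⊆ range i := fun k hk => by
      simp only [mem_range, mem_filter] at hk ⊢
      by_contra! hik
      exact h ⟨by omega, hP hik hk.2⟩
    simpa [h] using card_le_card this

def blockStart (μ : List ℕ) (i : ℕ) : ℕ := (μ.take i).sum

section Blocks
variable (μ : List ℕ)

theorem blockStart_succ (i : ℕ) : blockStart μ (i + 1) = blockStart μ i + μ.getD i 0 := by
  rw [blockStart, blockStart, List.take_add_one, List.sum_append, List.getD_eq_getElem?_getD]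
  rcases μ[i]? with _ | a <;> simp

theorem blockStart_mono : Monotone (blockStart μ) :=
  monotone_nat_of_le_succ fun i => by rw [blockStart_succ]; omega

theorem blockStart_le_sum (i : ℕ) : blockStart μ i ≤ μ.sum :=
  (List.take_sublist i μ).sum_le_sum fun _ _ => Nat.zero_le _

theorem blockStart_length : blockStart μ μ.length = μ.sum := by
  rw [blockStart, List.take_length]

theorem lt_blockOf_iff (x i : ℕ) :
    i < blockOf μ x ↔ i < μ.length ∧ blockStart μ (i + 1) ≤ x :=
  lt_card_filter_range_iff (fun _ _ hij h => (blockStart_mono μ (by omega)).trans h) _ _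

theorem blockOf_mono : Monotone (blockOf μ) :=
  fun _ _ hxy => card_le_card (monotone_filter_right _ fun _ _ h => h.trans hxy)

theorem lt_of_blockOf_lt {x y : ℕ} (h : blockOf μ x < blockOf μ y) : x < y :=
  lt_of_not_ge fun hyx => (blockOf_mono μ hyx).not_gt h

theorem blockOf_eq_of_blockStart_le_of_lt {x i : ℕ} (h₁ : blockStart μ i ≤ x)
    (h₂ : x < blockStart μ (i + 1)) : blockOf μ x = i := by
  have hi : i < μ.length := by
    by_contra! hi
    rw [blockStart_succ, List.getD_eq_default _ _ hi] at h₂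
    omega
  refine le_antisymm (not_lt.1 fun hlt => ?_) ?_
  · exact ((lt_blockOf_iff μ x i).1 hlt).2.not_gt h₂
  · cases i with
    | zero => exact Nat.zero_le _
    | succ k => exact (lt_blockOf_iff μ x k).2 ⟨by omega, h₁⟩

theorem blockStart_blockOf_le (x : ℕ) : blockStart μ (blockOf μ x) ≤ x := by
  rcases h : blockOf μ x with _ | k
  · exact Nat.zero_le x
  · exact ((lt_blockOf_iff μ x k).1 (by omega)).2

theorem lt_blockStart_blockOf_succ {x : ℕ} (hx : x < μ.sum) :
    x < blockStart μ (blockOf μ x + 1) := by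
  by_contra! h
  by_cases hb : blockOf μ x < μ.length
  · exact lt_irrefl _ ((lt_blockOf_iff μ x _).2 ⟨hb, h⟩)
  · have := blockStart_mono μ (show μ.length ≤ blockOf μ x + 1 by omega)
    rw [blockStart_length] at this
    omega

theorem blockOf_eq_of_blockStart_blockOf_le {x y : ℕ} (hyx : y ≤ x)
    (h : blockStart μ (blockOf μ x) ≤ y) : blockOf μ y = blockOf μ x := by
  refine le_antisymm (blockOf_mono μ hyx) ?_
  rcases hb : blockOf μ x with _ | k
  · exact Nat.zero_le _
  · rw [hb] at h
    exact (lt_blockOf_iff μ y k).2 ⟨((lt_blockOf_iff μ x k).1 (by omega)).1, h⟩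

end Blocks

theorem sum_range_countP_lt (l : List ℕ) {M : ℕ} (hM : ∀ p ∈ l, p ≤ M) :
    ∑ j ∈ range M, l.countP (fun p => decide (j < p)) = l.sum := by
  induction l with
  | nil => simp
  | cons a t ih =>
    simp only [List.countP_cons, sum_add_distrib, List.sum_cons, decide_eq_true_eq]
    rw [ih fun p hp => hM p (List.mem_cons_of_mem a hp), sum_boole]
    have : {j ∈ range M | j < a} = range a := by
      ext j; simp only [mem_filter, mem_range]
      have := hM a List.mem_cons_self
      omega
    simp [this, add_comm]

theorem conjP_getD (l : List ℕ) (j : ℕ) :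
    (conjP l).getD j 0 = l.countP (fun p => decide (j < p)) := by
  by_cases hj : j < l.foldr max 0
  · simp [conjP, hj]
  · rw [List.getD_eq_default _ _ (by simpa [conjP] using hj), eq_comm, List.countP_eq_zero]
    intro p hp
    have := List.le_max_of_le' 0 hp le_rfl
    simp only [decide_eq_true_eq]
    omega

theorem conjP_sum (l : List ℕ) : (conjP l).sum = l.sum := by
  rw [← sum_range_countP_lt l fun p hp => List.le_max_of_le' 0 hp le_rfl,
    sum_eq_multiset_sum]
  rfl

theorem lt_countP_lt_iff {l : List ℕ} (hl : l.Pairwise (· ≥ ·)) (i j : ℕ) :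
    i < l.countP (fun p => decide (j < p)) ↔ j < l.getD i 0 := by
  induction l generalizing i with
  | nil => simp
  | cons a t ih =>
    obtain ⟨ha, ht⟩ := List.pairwise_cons.1 hl
    by_cases hja : j < a
    · cases i <;> simp [hja, ih ht]
    · have h0 : t.countP (fun p => decide (j < p)) = 0 :=
        List.countP_eq_zero.2 fun p hp => by have := ha p hp; simp only [decide_eq_true_eq]; omega
      cases i with
      | zero => simp [hja, h0]
      | succ k =>
        have : t.getD k 0 ≤ a := by
          rw [List.getD_eq_getElem?_getD]
          rcases h : t[k]? with _ | p
          · simp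
          · exact ha p (List.mem_of_getElem? h)
        simp only [List.countP_cons, h0, hja, List.getD_cons_succ, decide_false,
          Bool.false_eq_true, if_false]
        omega

theorem lt_conjP_getD_iff {l : List ℕ} (hl : l.Pairwise (· ≥ ·)) (i j : ℕ) :
    i < (conjP l).getD j 0 ↔ j < l.getD i 0 := by
  rw [conjP_getD, lt_countP_lt_iff hl]

section Perm
variable {r : ℕ}

theorem inYoung_iff (μ : List ℕ) (u : Equiv.Perm (Fin r)) :
    inYoung μ u ↔ ∀ x : Fin r, blockOf μ (u x) = blockOf μ x := by
  simp [inYoung, pApp]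

theorem inYoung_one (μ : List ℕ) : inYoung μ (1 : Equiv.Perm (Fin r)) :=
  (inYoung_iff μ 1).2 fun _ => rfl

theorem inYoung_inv {μ : List ℕ} {u : Equiv.Perm (Fin r)} (h : inYoung μ u) : inYoung μ u⁻¹ :=
  (inYoung_iff μ _).2 fun x => by
    simpa using ((inYoung_iff μ u).1 h (u⁻¹ x)).symm

theorem inYoung_swap (μ : List ℕ) {x y : Fin r} (h : blockOf μ x = blockOf μ y) :
    inYoung μ (Equiv.swap x y) := by
  refine (inYoung_iff μ _).2 fun z => ?_
  rcases eq_or_ne z x with rfl | hx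
  · rw [Equiv.swap_apply_left, h]
  rcases eq_or_ne z y with rfl | hy
  · rw [Equiv.swap_apply_right, h]
  · rw [Equiv.swap_apply_of_ne_of_ne hx hy]

theorem permLen_inv (u : Equiv.Perm (Fin r)) : permLen u⁻¹ = permLen u := by
  refine card_bij' (fun p _ => (u⁻¹ p.2, u⁻¹ p.1)) (fun p _ => (u p.2, u p.1)) ?_ ?_ ?_ ?_ <;>
    simp +contextual

theorem swap_lt_swap_of_adjacent {a b z z' : Fin r} (hab : (a : ℕ) + 1 = b) (hzz : z < z')
    (hne : ¬(z = a ∧ z' = b)) : Equiv.swap a b z < Equiv.swap a b z' := by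
  have hval : ∀ w : Fin r, (Equiv.swap a b w : ℕ) =
      if (w : ℕ) = a then b else if (w : ℕ) = b then a else w := by
    intro w
    rw [Equiv.swap_apply_def]
    split_ifs <;> simp_all [Fin.ext_iff]
  rw [Fin.lt_def, hval, hval]
  rw [Fin.lt_def] at hzz
  simp only [Fin.ext_iff] at hne
  split_ifs <;> omega

theorem permLen_swap_mul_lt (u : Equiv.Perm (Fin r)) {a b : Fin r} (hab : (a : ℕ) + 1 = b)
    (h : u⁻¹ b < u⁻¹ a) : permLen (Equiv.swap a b * u) < permLen u := by
  have hab' : a < b := by rw [Fin.lt_def]; omega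
  unfold permLen
  apply Finset.card_lt_card
  refine (Finset.ssubset_iff_of_subset fun p hp => ?_).2 ⟨(u⁻¹ b, u⁻¹ a), ?_, ?_⟩
  · rw [mem_filter] at hp ⊢
    refine ⟨mem_univ p, hp.2.1, lt_of_not_ge fun hle => ?_⟩
    have hne : ¬(u p.1 = a ∧ u p.2 = b) := fun ⟨h1, h2⟩ => by
      simp only [← h1, ← h2, Equiv.Perm.inv_def, Equiv.symm_apply_apply] at h
      exact h.not_gt hp.2.1
    exact hp.2.2.not_gt (swap_lt_swap_of_adjacent hab (hle.lt_of_ne fun he =>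
      hp.2.1.ne (u.injective he)) hne)
  · rw [mem_filter]
    simpa [hab'] using h
  · rw [mem_filter]
    simp [hab'.le]

theorem permLen_mul_swap_lt (u : Equiv.Perm (Fin r)) {a b : Fin r} (hab : (a : ℕ) + 1 = b)
    (h : u b < u a) : permLen (u * Equiv.swap a b) < permLen u := by
  rw [← permLen_inv, mul_inv_rev, Equiv.swap_inv, ← permLen_inv u]
  exact permLen_swap_mul_lt u⁻¹ hab (by simpa using h)

end Perm

def StrictMonoOnBlocks {r : ℕ} (μ : List ℕ) (f : Fin r → Fin r) : Prop :=
  ∀ ⦃x y : Fin r⦄, x < y → blockOf μ x = blockOf μ y → f x < f y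

section Distinguished
variable {r : ℕ} {μ ν : List ℕ}

theorem strictMonoOnBlocks_of_succ {f : Fin r → Fin r}
    (h : ∀ x y : Fin r, (x : ℕ) + 1 = y → blockOf μ x = blockOf μ y → f x < f y) :
    StrictMonoOnBlocks μ f := by
  intro x y hxy hb
  obtain ⟨n, hn⟩ := Nat.exists_eq_add_of_lt (Fin.lt_def.1 hxy)
  induction n generalizing y with
  | zero => exact h x y hn.symm hb
  | succ n ih =>
    let z : Fin r := ⟨x + n + 1, by omega⟩
    have hz : blockOf μ z = blockOf μ x :=
      le_antisymm (hb ▸ blockOf_mono μ (show (x + n + 1 : ℕ) ≤ y by omega))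
        (blockOf_mono μ (show (x : ℕ) ≤ x + n + 1 by omega))
    exact (ih (y := z) (Fin.lt_def.2 (by simp [z])) hz.symm rfl).trans
      (h z y (by dsimp only [z]; omega) (hz.trans hb))

theorem IsDistinguished.strictMonoOnBlocks {u : Equiv.Perm (Fin r)}
    (hd : IsDistinguished μ ν u) : StrictMonoOnBlocks μ u := by
  refine strictMonoOnBlocks_of_succ fun x y hxy hb => lt_of_not_ge fun hle => ?_
  have hne : x ≠ y := fun h => by subst h; omega
  have := hd _ 1 (inYoung_swap μ hb) (inYoung_one ν)
  rw [one_mul] at this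
  exact this.not_gt (permLen_mul_swap_lt u hxy (hle.lt_of_ne (u.injective.ne hne).symm))

theorem IsDistinguished.strictMonoOnBlocks_inv {u : Equiv.Perm (Fin r)}
    (hd : IsDistinguished μ ν u) : StrictMonoOnBlocks ν ⇑u⁻¹ := by
  refine strictMonoOnBlocks_of_succ fun x y hxy hb => lt_of_not_ge fun hle => ?_
  have hne : x ≠ y := fun h => by subst h; omega
  have := hd 1 _ (inYoung_one μ) (inYoung_swap ν hb)
  rw [mul_one] at this
  exact this.not_gt (permLen_swap_mul_lt u hxy (hle.lt_of_ne (u⁻¹.injective.ne hne).symm))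

theorem isDistinguished_of_strictMonoOnBlocks {u : Equiv.Perm (Fin r)}
    (hu : StrictMonoOnBlocks μ u) (hu' : StrictMonoOnBlocks ν ⇑u⁻¹) :
    IsDistinguished μ ν u := by
  intro a b ha hb
  have ha' := (inYoung_iff μ _).1 (inYoung_inv ha)
  have hb' := (inYoung_iff ν _).1 hb
  have block_lt {κ : List ℕ} {f : Fin r → Fin r} (hf : StrictMonoOnBlocks κ f) {x y : Fin r}
      (hxy : x < y) (hfxy : f y < f x) : blockOf κ x < blockOf κ y :=
    (blockOf_mono κ hxy.le).lt_of_ne fun he => (hf hxy he).not_gt hfxy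
  refine card_le_card_of_injOn (fun p => (a⁻¹ p.1, a⁻¹ p.2)) (fun p hp => ?_)
    fun p _ q _ hpq => Prod.ext (a⁻¹.injective (congrArg Prod.fst hpq))
      (a⁻¹.injective (congrArg Prod.snd hpq))
  rw [mem_coe, mem_filter] at hp ⊢
  simp only [mem_univ, true_and] at hp
  simp only [Equiv.Perm.mul_apply, Equiv.Perm.inv_def, Equiv.apply_symm_apply] at ha' ⊢
  refine ⟨mem_univ _, lt_of_blockOf_lt μ ?_, lt_of_blockOf_lt ν ?_⟩
  · rw [ha', ha']
    exact block_lt hu hp.1 hp.2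
  · rw [hb', hb']
    simpa using block_lt hu' hp.2 (by simpa using hp.1)

theorem isDistinguished_iff {u : Equiv.Perm (Fin r)} :
    IsDistinguished μ ν u ↔ StrictMonoOnBlocks μ u ∧ StrictMonoOnBlocks ν ⇑u⁻¹ :=
  ⟨fun hd => ⟨hd.strictMonoOnBlocks, hd.strictMonoOnBlocks_inv⟩,
    fun h => isDistinguished_of_strictMonoOnBlocks h.1 h.2⟩

theorem eq_one_of_inYoung_conj_iff_injective (u : Equiv.Perm (Fin r)) :
    (∀ τ : Equiv.Perm (Fin r), inYoung ν τ → inYoung μ (u⁻¹ * τ * u) → τ = 1) ↔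
      Function.Injective fun x : Fin r => (blockOf μ x, blockOf ν (u x)) := by
  constructor
  · intro h x y hxy
    simp only [Prod.mk.injEq] at hxy
    have hconj : u⁻¹ * Equiv.swap (u x) (u y) * u = Equiv.swap x y := by
      rw [Equiv.swap_apply_apply]; group
    have := h _ (inYoung_swap ν hxy.2) (hconj ▸ inYoung_swap μ hxy.1)
    exact u.injective (Equiv.swap_eq_one_iff.1 this)
  · intro h τ hτ hσ
    have hfix : u⁻¹ * τ * u = 1 := Equiv.ext fun x => h <| by
      simp only [Prod.mk.injEq]
      refine ⟨(inYoung_iff μ _).1 hσ x, ?_⟩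
      simpa using (inYoung_iff ν τ).1 hτ (u x)
    calc τ = u * (u⁻¹ * τ * u) * u⁻¹ := by group
      _ = 1 := by rw [hfix]; group

end Distinguished

def posInBlock (μ : List ℕ) (x : ℕ) : ℕ := x - blockStart μ (blockOf μ x)

section PosInBlock
variable (μ : List ℕ)

theorem blockStart_add_posInBlock (x : ℕ) : blockStart μ (blockOf μ x) + posInBlock μ x = x := by
  have := blockStart_blockOf_le μ x
  unfold posInBlock
  omega

theorem posInBlock_lt_getD {x : ℕ} (hx : x < μ.sum) :
    posInBlock μ x < μ.getD (blockOf μ x) 0 := by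
  have hlt := lt_blockStart_blockOf_succ μ hx
  have := blockStart_blockOf_le μ x
  rw [blockStart_succ] at hlt
  unfold posInBlock
  omega

theorem blockOf_blockStart_add {i j : ℕ} (hj : j < μ.getD i 0) :
    blockOf μ (blockStart μ i + j) = i :=
  blockOf_eq_of_blockStart_le_of_lt μ (Nat.le_add_right _ _) (by rw [blockStart_succ]; omega)

theorem posInBlock_blockStart_add {i j : ℕ} (hj : j < μ.getD i 0) :
    posInBlock μ (blockStart μ i + j) = j := by
  rw [posInBlock, blockOf_blockStart_add μ hj]
  omega

theorem posInBlock_lt_posInBlock {x y : ℕ} (hxy : x < y) (hb : blockOf μ x = blockOf μ y) :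
    posInBlock μ x < posInBlock μ y := by
  have := hb ▸ blockStart_blockOf_le μ x
  unfold posInBlock
  rw [hb]
  omega

end PosInBlock

section RowToCol
variable {l : List ℕ}

-- Position `blockStart l i + j` is the cell `(i, j)` of the Young diagram of `l` read row by row;
-- it goes to `blockStart (conjP l) j + i`, the same cell read column by column.
def transposeIndex (l : List ℕ) (x : ℕ) : ℕ :=
  blockStart (conjP l) (posInBlock l x) + blockOf l x

theorem blockOf_lt_conjP_getD (hl : l.Pairwise (· ≥ ·)) {x : ℕ} (hx : x < l.sum) :
    blockOf l x < (conjP l).getD (posInBlock l x) 0 :=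
  (lt_conjP_getD_iff hl _ _).2 (posInBlock_lt_getD l hx)

theorem blockOf_conjP_transposeIndex (hl : l.Pairwise (· ≥ ·)) {x : ℕ} (hx : x < l.sum) :
    blockOf (conjP l) (transposeIndex l x) = posInBlock l x :=
  blockOf_blockStart_add _ (blockOf_lt_conjP_getD hl hx)

theorem posInBlock_conjP_transposeIndex (hl : l.Pairwise (· ≥ ·)) {x : ℕ} (hx : x < l.sum) :
    posInBlock (conjP l) (transposeIndex l x) = blockOf l x :=
  posInBlock_blockStart_add _ (blockOf_lt_conjP_getD hl hx)

theorem transposeIndex_lt_sum (hl : l.Pairwise (· ≥ ·)) {x : ℕ} (hx : x < l.sum) :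
    transposeIndex l x < l.sum := by
  have h := blockOf_lt_conjP_getD hl hx
  have := blockStart_le_sum (conjP l) (posInBlock l x + 1)
  rw [blockStart_succ, conjP_sum] at this
  unfold transposeIndex
  omega

theorem transposeIndex_injOn (hl : l.Pairwise (· ≥ ·)) {x y : ℕ} (hx : x < l.sum)
    (hy : y < l.sum) (h : transposeIndex l x = transposeIndex l y) : x = y := by
  have hpos := congrArg (blockOf (conjP l)) h
  have hblock := congrArg (posInBlock (conjP l)) h
  rw [blockOf_conjP_transposeIndex hl hx, blockOf_conjP_transposeIndex hl hy] at hpos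
  rw [posInBlock_conjP_transposeIndex hl hx, posInBlock_conjP_transposeIndex hl hy] at hblock
  rw [← blockStart_add_posInBlock l x, ← blockStart_add_posInBlock l y, hpos, hblock]

def rowToCol (hl : l.Pairwise (· ≥ ·)) : Equiv.Perm (Fin l.sum) :=
  Equiv.ofBijective (fun x => ⟨transposeIndex l x, transposeIndex_lt_sum hl x.isLt⟩)
    (Finite.injective_iff_bijective.1 fun x y h =>
      Fin.ext (transposeIndex_injOn hl x.isLt y.isLt (congrArg Fin.val h)))

variable (hl : l.Pairwise (· ≥ ·))

theorem blockOf_conjP_rowToCol (x : Fin l.sum) :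
    blockOf (conjP l) (rowToCol hl x) = posInBlock l x :=
  blockOf_conjP_transposeIndex hl x.isLt

theorem posInBlock_conjP_rowToCol (x : Fin l.sum) :
    posInBlock (conjP l) (rowToCol hl x) = blockOf l x :=
  posInBlock_conjP_transposeIndex hl x.isLt

theorem strictMonoOnBlocks_rowToCol : StrictMonoOnBlocks l (rowToCol hl) := fun x y hxy hb =>
  lt_of_blockOf_lt (conjP l) <| by
    rw [blockOf_conjP_rowToCol, blockOf_conjP_rowToCol]
    exact posInBlock_lt_posInBlock l hxy hb

theorem strictMonoOnBlocks_rowToCol_inv : StrictMonoOnBlocks (conjP l) ⇑(rowToCol hl)⁻¹ :=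
  fun a b hab hb => lt_of_blockOf_lt l <| by
    have := posInBlock_lt_posInBlock (conjP l) hab hb
    rwa [← (rowToCol hl).apply_symm_apply a, ← (rowToCol hl).apply_symm_apply b,
      posInBlock_conjP_rowToCol, posInBlock_conjP_rowToCol] at this

theorem injective_blockOf_rowToCol :
    Function.Injective fun x : Fin l.sum => (blockOf l x, blockOf (conjP l) (rowToCol hl x)) := by
  intro x y h
  simp only [Prod.mk.injEq, blockOf_conjP_rowToCol] at h
  ext
  rw [← blockStart_add_posInBlock l x, ← blockStart_add_posInBlock l y, h.1, h.2]

end RowToCol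

section Uniqueness
variable {r : ℕ} {μ ν : List ℕ}

theorem posInBlock_le_blockOf_apply {u : Equiv.Perm (Fin r)} (hu : StrictMonoOnBlocks μ u)
    (hinj : Function.Injective fun x : Fin r => (blockOf μ x, blockOf ν (u x))) (x : Fin r) :
    posInBlock μ x ≤ blockOf ν (u x) := by
  induction hx : posInBlock μ x generalizing x with
  | zero => exact Nat.zero_le _
  | succ n ih =>
    have hstart := blockStart_add_posInBlock μ x
    let y : Fin r := ⟨x - 1, by omega⟩
    have hy : blockOf μ y = blockOf μ x :=
      blockOf_eq_of_blockStart_blockOf_le μ (by dsimp only [y]; omega) (by dsimp only [y]; omega)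
    have hyx : y < x := Fin.lt_def.2 (by dsimp only [y]; omega)
    have hlt : blockOf ν (u y) < blockOf ν (u x) :=
      (blockOf_mono ν (hu hyx hy).le).lt_of_ne fun he => hyx.ne (hinj (Prod.ext hy he))
    have := ih y (by rw [posInBlock, hy]; dsimp only [y]; omega)
    omega

theorem eq_one_of_inYoung_of_strictMonoOnBlocks {π : Equiv.Perm (Fin r)} (hπ : inYoung ν π)
    (hmono : StrictMonoOnBlocks ν π) : π = 1 := by
  have hblock := (inYoung_iff ν π).1 hπ
  have hπmono : StrictMono π := fun y y' hyy' =>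
    (blockOf_mono ν hyy'.le).lt_or_eq.elim
      (fun hlt => lt_of_blockOf_lt ν (by rwa [hblock, hblock])) (hmono hyy')
  exact Equiv.ext fun y => congrArg (· y)
    (Subsingleton.elim (hπmono.orderIsoOfSurjective π π.surjective) (OrderIso.refl _))

theorem eq_of_blockOf_apply_eq {u v : Equiv.Perm (Fin r)} (hu : StrictMonoOnBlocks ν ⇑u⁻¹)
    (hv : StrictMonoOnBlocks ν ⇑v⁻¹) (h : ∀ x, blockOf ν (u x) = blockOf ν (v x)) : u = v := by
  have hblock : ∀ y, blockOf ν ((u * v⁻¹) y) = blockOf ν y := fun y => by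
    simp [h]
  refine (mul_inv_eq_one.1 (eq_one_of_inYoung_of_strictMonoOnBlocks
    ((inYoung_iff ν _).2 hblock) fun y y' hyy' hb => lt_of_not_ge fun hge => ?_))
  have hvy := hv hyy' hb
  rcases hge.lt_or_eq with hlt | heq
  · have := hu hlt (by rw [hblock, hblock, hb])
    simp only [Equiv.Perm.coe_mul, Equiv.Perm.coe_inv, Function.comp_apply,
      Equiv.symm_apply_apply] at this
    exact this.not_gt hvy
  · exact hyy'.ne ((u * v⁻¹).injective heq.symm)

end Uniqueness

theorem blockOf_conjP_apply_eq_rowToCol {l : List ℕ} (hl : l.Pairwise (· ≥ ·))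
    {u : Equiv.Perm (Fin l.sum)} (hu : StrictMonoOnBlocks l u)
    (hinj : Function.Injective fun x : Fin l.sum => (blockOf l x, blockOf (conjP l) (u x)))
    (x : Fin l.sum) : blockOf (conjP l) (u x) = blockOf (conjP l) (rowToCol hl x) := by
  have hsum : ∑ x : Fin l.sum, posInBlock l x = ∑ x : Fin l.sum, blockOf (conjP l) (u x) :=
    calc ∑ x : Fin l.sum, posInBlock l x
        = ∑ x : Fin l.sum, blockOf (conjP l) (rowToCol hl x) := by
          simp only [blockOf_conjP_rowToCol]
      _ = ∑ x : Fin l.sum, blockOf (conjP l) (u x) := by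
          rw [Equiv.sum_comp (rowToCol hl) fun y : Fin l.sum => blockOf (conjP l) y,
            Equiv.sum_comp u fun y : Fin l.sum => blockOf (conjP l) y]
  rw [blockOf_conjP_rowToCol]
  exact ((sum_eq_sum_iff_of_le fun x _ => posInBlock_le_blockOf_apply hu hinj x).1 hsum x
    (mem_univ x)).symm

/-- There exists a unique distinguished double coset representative `w` of
`S_λ \ S_r / S_{λ'}` such that `w⁻¹ S_λ w ∩ S_{λ'} = {1}`. -/
theorem stmt0 (r : ℕ) (l : List ℕ) (hl : IsPartition l) (hsum : l.sum = r) :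
    ∃! w : Equiv.Perm (Fin r),
      IsDistinguished l (conjP l) w ∧
      ∀ τ : Equiv.Perm (Fin r), inYoung (conjP l) τ →
        inYoung l (w⁻¹ * τ * w) → τ = 1 := by
  subst hsum
  refine ⟨rowToCol hl.1, ⟨isDistinguished_iff.2 ⟨strictMonoOnBlocks_rowToCol hl.1,
    strictMonoOnBlocks_rowToCol_inv hl.1⟩, (eq_one_of_inYoung_conj_iff_injective _).2
    (injective_blockOf_rowToCol hl.1)⟩, ?_⟩
  rintro u ⟨hdist, htriv⟩
  obtain ⟨hu, hu_inv⟩ := isDistinguished_iff.1 hdist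
  exact eq_of_blockOf_apply_eq hu_inv (strictMonoOnBlocks_rowToCol_inv hl.1)
    (blockOf_conjP_apply_eq_rowToCol hl.1 hu ((eq_one_of_inYoung_conj_iff_injective u).1 htriv))
end
end

section
/- In the Iwahori-Hecke algebra of the symmetric group S_r over a commutative ring R with parameter q, the following commutation relations hold for the Murphy elements L_k and the cycle elements T_{j,r} = T_{s_{j,r}} (1 ≤ j, k ≤ r-1): T_{j,r} L_k = L_k T_{j,r} if k < j; T_{j,r} L_k = L_{k+1} T_{k,r} - (q-1) L_{k+1} T_{k+1,r} if k = j; and T_{j,r} L_k = L_{k+1} T_{j,r} - (q-1) L_{k+1} T_{k+1,r} T_{j,k} if k > j. -/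
noncomputable section

/-- `T_{i,l} = T_i T_{i+1} ⋯ T_{l-1}` (with `T_{i,i} = 1`), for `i ≤ l`. -/
def genProd {H : Type} [Monoid H] (T : ℕ → H) (i l : ℕ) : H :=
  ((List.range (l - i)).map (fun t => T (i + t))).prod

lemma genProd_cons {H : Type} [Monoid H] (T : ℕ → H) {i l : ℕ} (h : i < l) :
    genProd T i l = T i * genProd T (i + 1) l := by
  have hn : l - i = (l - (i + 1)) + 1 := by omega
  simp only [genProd, hn, List.range_succ_eq_map, List.map_cons, List.prod_cons,
    List.map_map, Nat.add_zero]
  have hfun : ((fun t => T (i + t)) ∘ Nat.succ) = fun t => T (i + 1 + t) := by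
    funext t; simp only [Function.comp_apply]; congr 1; omega
  rw [hfun]

lemma genProd_split {H : Type} [Monoid H] (T : ℕ → H) {i l m : ℕ} (h1 : i ≤ l) (h2 : l ≤ m) :
    genProd T i m = genProd T i l * genProd T l m := by
  have hn : m - i = (l - i) + (m - l) := by omega
  simp only [genProd, hn, List.range_add, List.map_append, List.prod_append, List.map_map]
  have hfun : ((fun t => T (i + t)) ∘ fun x => l - i + x) = fun t => T (l + t) := by
    funext t; simp only [Function.comp_apply]; congr 1; omega
  rw [hfun]

lemma commute_genProd {H : Type} [Monoid H] {T : ℕ → H} {a : H} {i l : ℕ}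
    (h : ∀ t, i ≤ t → t < l → Commute a (T t)) : Commute a (genProd T i l) := by
  unfold genProd
  apply Commute.list_prod_right
  intro x hx
  simp only [List.mem_map, List.mem_range] at hx
  obtain ⟨t, ht, rfl⟩ := hx
  exact h (i + t) (by omega) (by omega)

/-- commutation relations between the Murphy elements `L_k` and the
cycle elements `T_{j,r}` in the (Ariki-Koike) Hecke algebra setting. -/
theorem stmt4 (R : Type) [CommRing R] (H : Type) [Ring H] [Algebra R H]
    (r : ℕ) (q qi : R) (hq : q * qi = 1)
    (T L : ℕ → H)
    (hquad : ∀ i, 1 ≤ i → i ≤ r - 1 → (T i - algebraMap R H q) * (T i + 1) = 0)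
    (hbraid : ∀ i, 1 ≤ i → i ≤ r - 2 →
      T i * T (i + 1) * T i = T (i + 1) * T i * T (i + 1))
    (hcomm : ∀ i j, i + 1 < j → j ≤ r - 1 → T i * T j = T j * T i)
    (hbraid0 : T 0 * T 1 * T 0 * T 1 = T 1 * T 0 * T 1 * T 0)
    (hL1 : L 1 = T 0)
    (hLrec : ∀ i, 2 ≤ i → L i = qi • (T (i - 1) * L (i - 1) * T (i - 1))) :
    ∀ j k, 1 ≤ j → j ≤ r - 1 → 1 ≤ k → k ≤ r - 1 →
      (k < j → genProd T j r * L k = L k * genProd T j r) ∧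
      (k = j → genProd T j r * L k =
          L (k + 1) * genProd T k r
            - (algebraMap R H q - 1) * (L (k + 1) * genProd T (k + 1) r)) ∧
      (j < k → genProd T j r * L k =
          L (k + 1) * genProd T j r
            - (algebraMap R H q - 1)
                * (L (k + 1) * genProd T (k + 1) r * genProd T j k)) := by
  intro j k hj1 hj2 hk1 hk2
  have hr2 : 2 ≤ r := by omega
  set cq := algebraMap R H q with hcqdef
  -- centrality helpers
  have hc : ∀ x : H, cq * x = x * cq := fun x => Algebra.commutes q x
  have hpull : ∀ x y : H, x * (cq * y) = cq * (x * y) := by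
    intro x y
    rw [← mul_assoc, ← hc, mul_assoc]
  have hpull2 : ∀ x y z : H, cq * (x * y * z) = x * (cq * y) * z := by
    intro x y z
    rw [← mul_assoc, ← hpull]
  have hc1 : ∀ x : H, (cq - 1) * x = x * (cq - 1) := by
    intro x
    rw [sub_mul, mul_sub, hc, one_mul, mul_one]
  have hpull1 : ∀ x y : H, x * ((cq - 1) * y) = (cq - 1) * (x * y) := by
    intro x y
    rw [← mul_assoc, ← hc1, mul_assoc]
  have hqc : ∀ x : H, qi • (cq * x) = x := by
    intro x
    rw [hcqdef, ← Algebra.smul_def, smul_smul, mul_comm qi q, hq, one_smul]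
  have hcancel : ∀ x y : H, cq * x = cq * y → x = y := by
    intro x y hxy
    calc x = qi • (cq * x) := (hqc x).symm
      _ = qi • (cq * y) := by rw [hxy]
      _ = y := hqc y
  have hLrec' : ∀ i, 1 ≤ i → cq * L (i + 1) = T i * L i * T i := by
    intro i hi
    have h := hLrec (i + 1) (by omega)
    simp only [Nat.add_sub_cancel] at h
    rw [h, hcqdef, ← Algebra.smul_def, smul_smul, hq, one_smul]
  have hT2 : ∀ i, 1 ≤ i → i ≤ r - 1 → T i * T i = cq * T i + cq - T i := by
    intro i h1 h2
    have h := hquad i h1 h2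
    rw [sub_mul, mul_add, mul_add, mul_one, mul_one] at h
    rw [sub_eq_zero] at h
    rw [eq_sub_iff_add_eq]
    exact h
  -- T_i commutes with L_k for i > k
  have commA : ∀ kk, 1 ≤ kk → ∀ i, kk < i → i ≤ r - 1 → T i * L kk = L kk * T i := by
    intro kk
    induction kk with
    | zero => intro h; exact absurd h (by omega)
    | succ n ih =>
      intro _ i hi hir
      by_cases hn : 1 ≤ n
      · have e := hLrec' n hn
        have c1 : Commute (T i) (T n) := (hcomm n i (by omega) hir).symm
        have c2 : Commute (T i) (L n) := ih hn i (by omega) hir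
        apply hcancel
        calc cq * (T i * L (n + 1)) = T i * (cq * L (n + 1)) := by rw [hpull (T i)]
          _ = T i * (T n * L n * T n) := by rw [e]
          _ = (T n * L n * T n) * T i := ((c1.mul_right c2).mul_right c1).eq
          _ = (cq * L (n + 1)) * T i := by rw [← e]
          _ = cq * (L (n + 1) * T i) := by rw [mul_assoc]
      · have hn0 : n = 0 := by omega
        subst hn0
        rw [hL1]
        exact (hcomm 0 i (by omega) hir).symm
  -- T_i commutes with L_m for i + 2 ≤ m
  have commB : ∀ m i, 1 ≤ i → i + 2 ≤ m → m ≤ r → T i * L m = L m * T i := by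
    intro m
    induction m with
    | zero => intro i h1 h2 h3; omega
    | succ m ih =>
      intro i h1 h2 h3
      by_cases hcase : i + 2 ≤ m
      · have e := hLrec' m (by omega)
        have c1 : Commute (T i) (T m) := hcomm i m (by omega) (by omega)
        have c2 : Commute (T i) (L m) := ih i h1 hcase (by omega)
        apply hcancel
        calc cq * (T i * L (m + 1)) = T i * (cq * L (m + 1)) := by rw [hpull (T i)]
          _ = T i * (T m * L m * T m) := by rw [e]
          _ = (T m * L m * T m) * T i := ((c1.mul_right c2).mul_right c1).eq
          _ = (cq * L (m + 1)) * T i := by rw [← e]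
          _ = cq * (L (m + 1) * T i) := by rw [mul_assoc]
      · have hm : m = i + 1 := by omega
        subst hm
        have e1 := hLrec' (i + 1) (by omega)
        have e2 := hLrec' i h1
        have br := hbraid i h1 (by omega)
        have cA : T (i + 1) * L i = L i * T (i + 1) := commA i h1 (i + 1) (by omega) (by omega)
        apply hcancel
        apply hcancel
        calc cq * (cq * (T i * L (i + 1 + 1)))
            = T i * (cq * (cq * L (i + 1 + 1))) := by rw [hpull (T i), hpull (T i)]
          _ = T i * (cq * (T (i + 1) * L (i + 1) * T (i + 1))) := by rw [e1]
          _ = T i * (T (i + 1) * (cq * L (i + 1)) * T (i + 1)) := by rw [hpull2]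
          _ = T i * (T (i + 1) * (T i * L i * T i) * T (i + 1)) := by rw [e2]
          _ = (T i * T (i + 1) * T i) * L i * (T i * T (i + 1)) := by noncomm_ring
          _ = (T (i + 1) * T i * T (i + 1)) * L i * (T i * T (i + 1)) := by rw [br]
          _ = (T (i + 1) * T i) * (T (i + 1) * L i) * (T i * T (i + 1)) := by noncomm_ring
          _ = (T (i + 1) * T i) * (L i * T (i + 1)) * (T i * T (i + 1)) := by rw [cA]
          _ = (T (i + 1) * T i) * L i * (T (i + 1) * T i * T (i + 1)) := by noncomm_ring
          _ = (T (i + 1) * T i) * L i * (T i * T (i + 1) * T i) := by rw [← br]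
          _ = T (i + 1) * (T i * L i * T i) * (T (i + 1) * T i) := by noncomm_ring
          _ = T (i + 1) * (cq * L (i + 1)) * (T (i + 1) * T i) := by rw [← e2]
          _ = cq * (T (i + 1) * L (i + 1) * (T (i + 1) * T i)) := by rw [← hpull2]
          _ = cq * (T (i + 1) * L (i + 1) * T (i + 1) * T i) := by noncomm_ring
          _ = cq * (cq * L (i + 1 + 1) * T i) := by rw [← e1]
          _ = cq * (cq * (L (i + 1 + 1) * T i)) := by rw [mul_assoc cq (L (i + 1 + 1)) (T i)]
  -- key single-generator relation
  have keyT : ∀ kk, 1 ≤ kk → kk ≤ r - 1 →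
      T kk * L kk = L (kk + 1) * T kk - (cq - 1) * L (kk + 1) := by
    intro kk h1 h2
    have e := hLrec' kk h1
    have ht2 := hT2 kk h1 h2
    have hLT : L (kk + 1) * T kk = cq * L (kk + 1) + (T kk * L kk - L (kk + 1)) := by
      apply hcancel
      calc cq * (L (kk + 1) * T kk)
          = (cq * L (kk + 1)) * T kk := (mul_assoc _ _ _).symm
        _ = (T kk * L kk * T kk) * T kk := by rw [e]
        _ = (T kk * L kk) * (T kk * T kk) := by rw [mul_assoc]
        _ = (T kk * L kk) * (cq * T kk + cq - T kk) := by rw [ht2]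
        _ = (T kk * L kk) * (cq * T kk + cq) - (T kk * L kk) * T kk := by rw [mul_sub]
        _ = (T kk * L kk) * (cq * T kk) + (T kk * L kk) * cq - (T kk * L kk) * T kk := by
              rw [mul_add]
        _ = cq * (T kk * L kk * T kk) + cq * (T kk * L kk) - T kk * L kk * T kk := by
              rw [hpull, ← hc]
        _ = cq * (cq * L (kk + 1)) + cq * (T kk * L kk) - cq * L (kk + 1) := by rw [← e]
        _ = cq * (cq * L (kk + 1) + (T kk * L kk - L (kk + 1))) := by noncomm_ring
    rw [hLT]
    noncomm_ring
  -- commutation of L with products of generators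
  have genA : ∀ kk jj, 1 ≤ kk → kk < jj → Commute (L kk) (genProd T jj r) := by
    intro kk jj h1 h2
    apply commute_genProd
    intro t ht1 ht2
    exact (commA kk h1 t (by omega) (by omega)).symm
  have genB : ∀ m jj ll, 1 ≤ jj → ll < m → m ≤ r → Commute (L m) (genProd T jj ll) := by
    intro m jj ll h1 h2 h3
    apply commute_genProd
    intro t ht1 ht2
    exact (commB m t (by omega) (by omega) h3).symm
  -- the k = j case
  have caseEq : ∀ kk, 1 ≤ kk → kk ≤ r - 1 →
      genProd T kk r * L kk =
        L (kk + 1) * genProd T kk r - (cq - 1) * (L (kk + 1) * genProd T (kk + 1) r) := by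
    intro kk h1 h2
    have hg : genProd T kk r = T kk * genProd T (kk + 1) r := genProd_cons T (by omega)
    have hA : Commute (L kk) (genProd T (kk + 1) r) := genA kk (kk + 1) h1 (by omega)
    have hkey := keyT kk h1 h2
    rw [hg]
    calc T kk * genProd T (kk + 1) r * L kk
        = T kk * (L kk * genProd T (kk + 1) r) := by rw [mul_assoc, ← hA.eq]
      _ = (T kk * L kk) * genProd T (kk + 1) r := by rw [mul_assoc]
      _ = (L (kk + 1) * T kk - (cq - 1) * L (kk + 1)) * genProd T (kk + 1) r := by rw [hkey]
      _ = L (kk + 1) * (T kk * genProd T (kk + 1) r)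
            - (cq - 1) * (L (kk + 1) * genProd T (kk + 1) r) := by noncomm_ring
  refine ⟨?_, ?_, ?_⟩
  · intro h
    exact ((genA k j hk1 h).eq).symm
  · intro h
    subst h
    exact caseEq k hk1 hk2
  · intro h
    have hsplit : genProd T j r = genProd T j k * genProd T k r :=
      genProd_split T (le_of_lt h) (by omega)
    have hB : Commute (L (k + 1)) (genProd T j k) := genB (k + 1) j k hj1 (by omega) (by omega)
    have hC : Commute (genProd T j k) (genProd T (k + 1) r) := by
      apply commute_genProd
      intro t ht1 ht2
      exact ((commute_genProd (a := T t) (fun s hs1 hs2 =>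
        (hcomm s t (by omega) (by omega)).symm))).symm
    have hterm2 : genProd T j k * (L (k + 1) * genProd T (k + 1) r)
        = L (k + 1) * genProd T (k + 1) r * genProd T j k := by
      calc genProd T j k * (L (k + 1) * genProd T (k + 1) r)
          = (genProd T j k * L (k + 1)) * genProd T (k + 1) r := (mul_assoc _ _ _).symm
        _ = (L (k + 1) * genProd T j k) * genProd T (k + 1) r := by rw [← hB.eq]
        _ = L (k + 1) * (genProd T j k * genProd T (k + 1) r) := mul_assoc _ _ _
        _ = L (k + 1) * (genProd T (k + 1) r * genProd T j k) := by rw [hC.eq]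
        _ = L (k + 1) * genProd T (k + 1) r * genProd T j k := (mul_assoc _ _ _).symm
    rw [hsplit]
    calc genProd T j k * genProd T k r * L k
        = genProd T j k * (genProd T k r * L k) := mul_assoc _ _ _
      _ = genProd T j k * (L (k + 1) * genProd T k r
            - (cq - 1) * (L (k + 1) * genProd T (k + 1) r)) := by rw [caseEq k hk1 hk2]
      _ = genProd T j k * (L (k + 1) * genProd T k r)
            - genProd T j k * ((cq - 1) * (L (k + 1) * genProd T (k + 1) r)) := by
            rw [mul_sub]
      _ = genProd T j k * (L (k + 1) * genProd T k r)
            - (cq - 1) * (genProd T j k * (L (k + 1) * genProd T (k + 1) r)) := by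
            rw [hpull1]
      _ = genProd T j k * (L (k + 1) * genProd T k r)
            - (cq - 1) * (L (k + 1) * genProd T (k + 1) r * genProd T j k) := by
            rw [hterm2]
      _ = (genProd T j k * L (k + 1)) * genProd T k r
            - (cq - 1) * (L (k + 1) * genProd T (k + 1) r * genProd T j k) := by
            rw [← mul_assoc]
      _ = (L (k + 1) * genProd T j k) * genProd T k r
            - (cq - 1) * (L (k + 1) * genProd T (k + 1) r * genProd T j k) := by
            rw [← hB.eq]
      _ = L (k + 1) * (genProd T j k * genProd T k r)
            - (cq - 1) * (L (k + 1) * genProd T (k + 1) r * genProd T j k) := by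
            rw [mul_assoc]
end
end

section
/- Let λ be an m-partition of r with removable nodes R_λ, and for n ∈ R_λ let j_n be the entry at node n in the column-filled tableau t_λ, and let λ_n be the m-partition obtained by removing node n. Then the tableau obtained by removing the entry r from t_λ · s_{j_n, r} equals t_{λ_n} (the column-filled tableau of λ_n). -/
noncomputable section
open scoped Classical
open Finset

/-- The `i`-th part (0-indexed row `i` of component `k`) of a multipartition. -/
def part (L : List (List ℕ)) (k i : ℕ) : ℕ := (L.getD k []).getD i 0

/-- `(k,i,j)` (all 0-indexed) is a node of the Young diagram of the
multipartition `L`. -/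
def mpMem (L : List (List ℕ)) (p : ℕ × ℕ × ℕ) : Prop :=
  p.2.2 < part L p.1 p.2.1

/-- The Finset of nodes of the Young diagram of `L`. -/
def mpNodes (L : List (List ℕ)) : Finset (ℕ × ℕ × ℕ) :=
  (Finset.range L.length ×ˢ
      Finset.range (L.flatten.sum + L.flatten.length + 1) ×ˢ
      Finset.range (L.flatten.sum + L.flatten.length + 1)).filter (fun p => mpMem L p)

/-- Row-reading order on nodes: components in order, rows top to bottom,
within a row left to right. -/
def rowLt (p q : ℕ × ℕ × ℕ) : Prop :=
  p.1 < q.1 ∨ (p.1 = q.1 ∧ (p.2.1 < q.2.1 ∨ (p.2.1 = q.2.1 ∧ p.2.2 < q.2.2)))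

/-- Column-reading order on nodes: components in reverse order, columns left to
right, within a column top to bottom. -/
def colLt (p q : ℕ × ℕ × ℕ) : Prop :=
  q.1 < p.1 ∨ (p.1 = q.1 ∧ (p.2.2 < q.2.2 ∨ (p.2.2 = q.2.2 ∧ p.2.1 < q.2.1)))

/-- The (0-indexed) entry at node `p` of the row-filled tableau `t^λ`. -/
def rowRank (L : List (List ℕ)) (p : ℕ × ℕ × ℕ) : ℕ :=
  ((mpNodes L).filter (fun q => rowLt q p)).card

/-- The (0-indexed) entry at node `p` of the column-filled tableau `t_λ`. -/
def colRank (L : List (List ℕ)) (p : ℕ × ℕ × ℕ) : ℕ :=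
  ((mpNodes L).filter (fun q => colLt q p)).card

/-- `w` is the permutation `w_λ` defined by `t^λ w_λ = t_λ`. -/
def wprop {r : ℕ} (L : List (List ℕ)) (w : Equiv.Perm (Fin r)) : Prop :=
  ∀ p ∈ mpNodes L, pApp w (rowRank L p) = colRank L p

/-- The concatenation `λ̄'` of the dual multipartition `λ' = (λ^(m)′,…,λ^(1)′)`. -/
def dualConcat (L : List (List ℕ)) : List ℕ := (L.reverse.map conjP).flatten


/-- `(k,i,j)` is a removable node of the multipartition `L`. -/
def isRemovableNode (L : List (List ℕ)) (p : ℕ × ℕ × ℕ) : Prop :=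
  p.2.2 + 1 = part L p.1 p.2.1 ∧ part L p.1 (p.2.1 + 1) < part L p.1 p.2.1

/-- The multipartition obtained from `L` by removing the removable node `p`. -/
def removeNode (L : List (List ℕ)) (p : ℕ × ℕ × ℕ) : List (List ℕ) :=
  L.set p.1 ((L.getD p.1 []).set p.2.1 (part L p.1 p.2.1 - 1))

/-- `s` is the cycle `s_{a,b}` (0-indexed) of `Fin r`, sending `a` to `b`,
`x` to `x-1` for `a < x ≤ b`, and fixing everything else. -/
def IsCyc {r : ℕ} (s : Equiv.Perm (Fin r)) (a b : ℕ) : Prop :=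
  a ≤ b ∧ b < r ∧ pApp s a = b ∧
    (∀ x, a < x → x ≤ b → pApp s x = x - 1) ∧
    (∀ x, x < a ∨ b < x → pApp s x = x)

/-!
Removing `n` deletes one node from the column reading order, so `t_{λ_n}` agrees with `t_λ`
on the nodes read before `n` and is one less on those read after `n`. The entries of the
former are `< j_n` and are fixed by `s_{j_n,r}`; those of the latter lie in `(j_n, r]` and
are lowered by one.
-/

lemma colLt_trans {p q t : ℕ × ℕ × ℕ} (h₁ : colLt p q) (h₂ : colLt q t) : colLt p t := by
  unfold colLt at *; omega

lemma colLt_irrefl (p : ℕ × ℕ × ℕ) : ¬ colLt p p := by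
  unfold colLt; omega

lemma colLt_trichotomous (p q : ℕ × ℕ × ℕ) : colLt p q ∨ p = q ∨ colLt q p := by
  obtain ⟨a, b, c⟩ := p; obtain ⟨d, e, f⟩ := q
  simp only [colLt, Prod.mk.injEq]; omega

namespace List

lemma lt_length_of_getD_ne {α : Type*} {l : List α} {i : ℕ} {d : α} (h : l.getD i d ≠ d) :
    i < l.length := by
  by_contra hi; exact h (getD_eq_default _ _ (not_lt.mp hi))

lemma getD_le_sum {M : Type*} [AddMonoid M] [PartialOrder M] [CanonicallyOrderedAdd M]
    (l : List M) (i : ℕ) : l.getD i 0 ≤ l.sum := by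
  rcases lt_or_ge i l.length with hi | hi
  · rw [getD_eq_getElem _ _ hi]; exact le_sum_of_mem (getElem_mem hi)
  · rw [getD_eq_default _ _ hi]; exact zero_le

lemma sum_range_length_getD {α M : Type*} [AddCommMonoid M] (f : α → M) (l : List α) (d : α) :
    ∑ i ∈ Finset.range l.length, f (l.getD i d) = (l.map f).sum := by
  induction l with
  | nil => simp
  | cons a t ih => simp [Finset.sum_range_succ', ← ih, add_comm]

end List

lemma part_le_sum_flatten (L : List (List ℕ)) (k i : ℕ) : part L k i ≤ L.flatten.sum := by
  have h : (L.getD k []).sum ≤ (L.map List.sum).sum :=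
    (List.getD_map L [] List.sum).symm.trans_le ((L.map List.sum).getD_le_sum k)
  exact (List.getD_le_sum _ i).trans (h.trans_eq List.sum_flatten.symm)

lemma length_getD_le_length_flatten (L : List (List ℕ)) (k : ℕ) :
    (L.getD k []).length ≤ L.flatten.length := by
  have h : (L.getD k []).length ≤ (L.map List.length).sum :=
    (List.getD_map L [] List.length).symm.trans_le ((L.map List.length).getD_le_sum k)
  exact h.trans_eq List.length_flatten.symm

lemma mpMem.lt_length {L : List (List ℕ)} {p : ℕ × ℕ × ℕ} (h : mpMem L p) :
    p.1 < L.length ∧ p.2.1 < (L.getD p.1 []).length := by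
  have hrow : p.2.1 < (L.getD p.1 []).length :=
    List.lt_length_of_getD_ne (d := 0) (by unfold mpMem part at h; omega)
  exact ⟨List.lt_length_of_getD_ne (d := []) (List.ne_nil_of_length_pos (by omega)), hrow⟩

lemma mem_mpNodes {L : List (List ℕ)} {p : ℕ × ℕ × ℕ} : p ∈ mpNodes L ↔ mpMem L p := by
  refine ⟨fun h => (mem_filter.mp h).2, fun h => mem_filter.mpr ⟨?_, h⟩⟩
  obtain ⟨hk, hi⟩ := h.lt_length
  have := length_getD_le_length_flatten L p.1
  have := part_le_sum_flatten L p.1 p.2.1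
  simp only [mem_product, mem_range]; unfold mpMem at h; omega

lemma card_mpNodes_le (L : List (List ℕ)) : #(mpNodes L) ≤ L.flatten.sum := by
  have hsub : mpNodes L ⊆ (range L.length).biUnion fun k =>
      (range (L.getD k []).length).biUnion fun i => (range (part L k i)).image fun j => (k, i, j) := by
    intro p hp
    have h := mem_mpNodes.mp hp
    simp only [mem_biUnion, mem_image, mem_range]
    exact ⟨p.1, h.lt_length.1, p.2.1, h.lt_length.2, p.2.2, h, rfl⟩
  calc #(mpNodes L)
      ≤ ∑ k ∈ range L.length, ∑ i ∈ range (L.getD k []).length, part L k i :=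
        (card_le_card hsub).trans <| card_biUnion_le.trans <| sum_le_sum fun _ _ =>
          card_biUnion_le.trans <| sum_le_sum fun _ _ => card_image_le.trans (card_range _).le
    _ = L.flatten.sum := by
        have hrow (l : List ℕ) : ∑ i ∈ range l.length, l.getD i 0 = l.sum := by
          simpa using List.sum_range_length_getD id l 0
        simp only [part, hrow, List.sum_range_length_getD List.sum, List.sum_flatten]

lemma mpMem_of_isRemovableNode {L : List (List ℕ)} {n : ℕ × ℕ × ℕ} (hn : isRemovableNode L n) :
    mpMem L n := by
  unfold mpMem; have := hn.1; omega

lemma part_removeNode {L : List (List ℕ)} {n : ℕ × ℕ × ℕ} (hn : isRemovableNode L n) (k i : ℕ) :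
    part (removeNode L n) k i = if k = n.1 ∧ i = n.2.1 then n.2.2 else part L k i := by
  obtain ⟨hk, hi⟩ := (mpMem_of_isRemovableNode hn).lt_length
  have h := hn.1
  simp only [removeNode, part, List.getD_eq_getElem?_getD, List.getElem?_set] at h hi ⊢
  rcases eq_or_ne k n.1 with rfl | hkn
  · rcases eq_or_ne i n.2.1 with rfl | hin
    · simp only [hk, getElem?_pos, Option.getD_some] at h hi ⊢
      simp only [hi, getElem?_pos, Option.getD_some, List.getElem?_set_self hi, if_true,
        and_self] at h ⊢
      omega
    · simp [hk, Ne.symm hin, hin]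
  · simp [Ne.symm hkn, hkn]

lemma mpMem_removeNode {L : List (List ℕ)} {n : ℕ × ℕ × ℕ} (hn : isRemovableNode L n)
    (p : ℕ × ℕ × ℕ) : mpMem (removeNode L n) p ↔ mpMem L p ∧ p ≠ n := by
  have h := hn.1
  obtain ⟨k, i, j⟩ := p; obtain ⟨a, b, c⟩ := n
  simp only [mpMem, part_removeNode hn, ne_eq, Prod.mk.injEq] at h ⊢
  split_ifs with hki
  · obtain ⟨rfl, rfl⟩ := hki; omega
  · tauto

lemma mpNodes_removeNode {L : List (List ℕ)} {n : ℕ × ℕ × ℕ} (hn : isRemovableNode L n) :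
    mpNodes (removeNode L n) = (mpNodes L).erase n := by
  ext p
  rw [mem_mpNodes, mem_erase, mem_mpNodes, mpMem_removeNode hn, and_comm]

lemma colRank_lt_colRank {L : List (List ℕ)} {p q : ℕ × ℕ × ℕ} (hp : p ∈ mpNodes L)
    (h : colLt p q) : colRank L p < colRank L q := by
  refine card_lt_card ⟨monotone_filter_right _ fun _ _ hx => colLt_trans hx h, fun hsub => ?_⟩
  exact colLt_irrefl p (mem_filter.mp (hsub (mem_filter.mpr ⟨hp, h⟩))).2

lemma colRank_lt_card {L : List (List ℕ)} {p : ℕ × ℕ × ℕ} (hp : p ∈ mpNodes L) :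
    colRank L p < #(mpNodes L) :=
  card_lt_card (filter_ssubset.mpr ⟨p, hp, colLt_irrefl p⟩)

lemma colRank_removeNode {L : List (List ℕ)} {n : ℕ × ℕ × ℕ} (hn : isRemovableNode L n)
    (p : ℕ × ℕ × ℕ) :
    colRank (removeNode L n) p = if colLt n p then colRank L p - 1 else colRank L p := by
  have hnL : n ∈ mpNodes L := mem_mpNodes.mpr (mpMem_of_isRemovableNode hn)
  unfold colRank
  rw [mpNodes_removeNode hn, filter_erase]
  split_ifs with h
  · rw [card_erase_of_mem (mem_filter.mpr ⟨hnL, h⟩)]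
  · rw [erase_eq_of_notMem (by simp [h])]

theorem stmt5_general (r : ℕ) (L : List (List ℕ))
    (hr : L.flatten.sum = r)
    (n : ℕ × ℕ × ℕ) (hn : isRemovableNode L n)
    (s : Equiv.Perm (Fin r)) (hs : IsCyc s (colRank L n) (r - 1)) :
    ∀ p, mpMem (removeNode L n) p →
      pApp s (colRank L p) = colRank (removeNode L n) p := by
  intro p hp
  obtain ⟨-, -, -, hs_between, hs_fix⟩ := hs
  obtain ⟨hpL, hpn⟩ := (mpMem_removeNode hn p).mp hp
  replace hpL : p ∈ mpNodes L := mem_mpNodes.mpr hpL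
  have hnL : n ∈ mpNodes L := mem_mpNodes.mpr (mpMem_of_isRemovableNode hn)
  rw [colRank_removeNode hn p]
  rcases colLt_trichotomous p n with hlt | rfl | hgt
  · rw [if_neg fun h => colLt_irrefl p (colLt_trans hlt h)]
    exact hs_fix _ (Or.inl (colRank_lt_colRank hpL hlt))
  · exact absurd rfl hpn
  · have hr' : colRank L p < r := (colRank_lt_card hpL).trans_le (hr ▸ card_mpNodes_le L)
    rw [if_pos hgt]
    exact hs_between _ (colRank_lt_colRank hnL hgt) (by omega)

/-- (3.3a): removing the entry `r` (0-indexed: `r-1`) from the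
tableau `t_λ · s_{j_n, r}` yields the column-filled tableau `t_{λ_n}`:
on every node `p` of `λ_n`, the entry `s_{j_n,r}(t_λ(p))` equals `t_{λ_n}(p)`.
Here `j_n = colRank L n` is the (0-indexed) entry at `n` in `t_λ`. -/
theorem stmt5 (r : ℕ) (L : List (List ℕ))
    (hL : ∀ l ∈ L, IsPartition l) (hr : L.flatten.sum = r)
    (n : ℕ × ℕ × ℕ) (hn : isRemovableNode L n)
    (s : Equiv.Perm (Fin r)) (hs : IsCyc s (colRank L n) (r - 1)) :
    ∀ p, mpMem (removeNode L n) p →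
      pApp s (colRank L p) = colRank (removeNode L n) p :=
  stmt5_general r L hr n hn s hs
end
end

section
/- In the Ariki-Koike setting, for a = [0, a_1, ..., a_{m-1}, r] ∈ Λ[m,r] and v_a = π_a T_{w_a} π̃_{a'}, the relation v_a T_i = T_{(i)w_a^{-1}} v_a holds whenever i ≠ r - a_j for all j = 1,...,m, where (i)w_a^{-1} denotes the image of i under w_a^{-1}. -/
noncomputable section
open scoped Classical
open Finset

/-- The simple transposition `(i, i+1)` (0-indexed) of `Fin r`. -/
def sgen (r i : ℕ) : Equiv.Perm (Fin r) :=
  if h : i + 1 < r then Equiv.swap ⟨i, by omega⟩ ⟨i + 1, h⟩ else 1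

/-- `π_a(x) = Π_{j=1}^a (L_j - x)`. -/
def piaE (R : Type) [CommRing R] (H : Type) [Ring H] [Algebra R H]
    (Lm : ℕ → H) (x : R) (a : ℕ) : H :=
  ((List.range a).map (fun j => Lm (j + 1) - algebraMap R H x)).prod

/-- Cumulative size `a_i = |λ^(1)| + ⋯ + |λ^(i)|` of a multipartition. -/
def cumMP (M : List (List ℕ)) (i : ℕ) : ℕ := ((M.take i).map List.sum).sum

/-- The dual multipartition `λ' = (λ^(m)′, …, λ^(1)′)`. -/
def dualMP (M : List (List ℕ)) : List (List ℕ) := M.reverse.map conjP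

/-- `π_{[λ]} = π_{a_1}(u_2) ⋯ π_{a_{m-1}}(u_m)` for `[λ] = [a_0,…,a_m]`. -/
def piOf (R : Type) [CommRing R] (H : Type) [Ring H] [Algebra R H]
    (u : ℕ → R) (Lm : ℕ → H) (M : List (List ℕ)) : H :=
  ((List.range (M.length - 1)).map
    (fun i => piaE R H Lm (u (i + 2)) (cumMP M (i + 1)))).prod

/-- `π̃_{[λ']} = π_{a_1}(u_{m-1}) ⋯ π_{a_{m-1}}(u_1)` for `[λ'] = [a_0,…,a_m]`. -/
def piTildeOf (R : Type) [CommRing R] (H : Type) [Ring H] [Algebra R H]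
    (u : ℕ → R) (Lm : ℕ → H) (M : List (List ℕ)) : H :=
  ((List.range (M.length - 1)).map
    (fun i => piaE R H Lm (u (M.length - 1 - i)) (cumMP M (i + 1)))).prod

/-- `x_c = Σ_{w ∈ S_c} T_w`. -/
def xEl {r : ℕ} {H : Type} [AddCommMonoid H] (T : Equiv.Perm (Fin r) → H)
    (c : List ℕ) : H :=
  ∑ w ∈ Finset.univ.filter (fun w => inYoung c w), T w

/-- `y_c = Σ_{w ∈ S_c} (-q)^{-ℓ(w)} T_w`. -/
def yEl {r : ℕ} {R : Type} [CommRing R] {H : Type} [AddCommMonoid H] [Module R H]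
    (q : Rˣ) (T : Equiv.Perm (Fin r) → H) (c : List ℕ) : H :=
  ∑ w ∈ Finset.univ.filter (fun w => inYoung c w),
    ((((-q)⁻¹ : Rˣ) : R) ^ permLen w) • T w

/-- `x_λ = π_{[λ]} x_{λ̄}`. -/
def xOf (R : Type) [CommRing R] (H : Type) [Ring H] [Algebra R H] {r : ℕ}
    (u : ℕ → R) (Lm : ℕ → H) (T : Equiv.Perm (Fin r) → H)
    (M : List (List ℕ)) : H :=
  piOf R H u Lm M * xEl T M.flatten

/-- `y_{λ'} = π̃_{[λ']} y_{λ̄'}`. -/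
def yOf (R : Type) [CommRing R] (H : Type) [Ring H] [Algebra R H] {r : ℕ}
    (q : Rˣ) (u : ℕ → R) (Lm : ℕ → H) (T : Equiv.Perm (Fin r) → H)
    (M : List (List ℕ)) : H :=
  piTildeOf R H u Lm (dualMP M) * yEl q T (dualConcat M)

/-- `z_λ = x_λ T_{w_λ} y_{λ'}`. -/
def zOf (R : Type) [CommRing R] (H : Type) [Ring H] [Algebra R H] {r : ℕ}
    (q : Rˣ) (u : ℕ → R) (Lm : ℕ → H) (T : Equiv.Perm (Fin r) → H)
    (M : List (List ℕ)) (w : Equiv.Perm (Fin r)) : H :=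
  xOf R H u Lm T M * T w * yOf R H q u Lm T M

/-- `π_a = π_{a_1}(u_2) ⋯ π_{a_{m-1}}(u_m)` for a sequence `a`. -/
def piSeq (R : Type) [CommRing R] (H : Type) [Ring H] [Algebra R H]
    (u : ℕ → R) (Lm : ℕ → H) (m : ℕ) (a : ℕ → ℕ) : H :=
  ((List.range (m - 1)).map (fun i => piaE R H Lm (u (i + 2)) (a (i + 1)))).prod

/-- `π̃_a = π_{a_1}(u_{m-1}) ⋯ π_{a_{m-1}}(u_1)` for a sequence `a`. -/
def piTildeSeq (R : Type) [CommRing R] (H : Type) [Ring H] [Algebra R H]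
    (u : ℕ → R) (Lm : ℕ → H) (m : ℕ) (a : ℕ → ℕ) : H :=
  ((List.range (m - 1)).map (fun i => piaE R H Lm (u (m - 1 - i)) (a (i + 1)))).prod

/-- `v_a = π_a T_{w_a} π̃_{a'}`. -/
def vSeq (R : Type) [CommRing R] (H : Type) [Ring H] [Algebra R H] {r : ℕ}
    (u : ℕ → R) (Lm : ℕ → H) (T : Equiv.Perm (Fin r) → H)
    (m : ℕ) (a : ℕ → ℕ) (wa : Equiv.Perm (Fin r)) : H :=
  piSeq R H u Lm m a * T wa * piTildeSeq R H u Lm m (fun j => r - a (m - j))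

/-!
If `i` is not of the form `r - a_j`, then `i` and `i + 1` lie in the image `(r - a_j, r - a_{j-1}]`
of a single block of `w_a`, on which `w_a` is increasing; so they are the images of two positions
`k, k + 1` with `a_{j-1} < k < a_j`. Then `T_{w_a} T_i = T_k T_{w_a}`, both sides being `T` of the
same permutation of length `ℓ(w_a) + 1`. Moreover `T_k` commutes with `π_b(x)` whenever `b ≠ k`:
it commutes with `L_l` for `l ∉ {k, k + 1}`, and with both `L_k L_{k+1}` and `L_k + L_{k+1}`. As no
`a_l` equals `k` and no `r - a_l` equals `i`, `T_k` commutes with `π_a` and `T_i` with `π̃_{a'}`.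
-/

open Equiv

variable {r : ℕ}

lemma pApp_of_lt (w : Perm (Fin r)) {x : ℕ} (hx : x < r) : pApp w x = w ⟨x, hx⟩ := dif_pos hx

lemma sgen_eq_swap {k : ℕ} (hk : k + 1 < r) :
    sgen r k = swap ⟨k, by omega⟩ ⟨k + 1, hk⟩ := dif_pos hk

lemma sgen_of_not_lt {k : ℕ} (hk : ¬ k + 1 < r) : sgen r k = 1 := dif_neg hk

lemma sgen_apply_val {k : ℕ} (hk : k + 1 < r) (x : Fin r) :
    (sgen r k x : ℕ) = if (x : ℕ) = k then k + 1 else if (x : ℕ) = k + 1 then k else x := by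
  rw [sgen_eq_swap hk, swap_apply_def]
  split_ifs <;> simp_all [Fin.ext_iff]

lemma sgen_apply_left {k : ℕ} (hk : k + 1 < r) : sgen r k ⟨k, by omega⟩ = ⟨k + 1, hk⟩ := by
  rw [sgen_eq_swap hk, swap_apply_left]

lemma sgen_apply_right {k : ℕ} (hk : k + 1 < r) : sgen r k ⟨k + 1, hk⟩ = ⟨k, by omega⟩ := by
  rw [sgen_eq_swap hk, swap_apply_right]

@[simp] lemma sgen_mul_self (k : ℕ) : sgen r k * sgen r k = 1 := by
  unfold sgen; split_ifs <;> simp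

@[simp] lemma sgen_apply_sgen_apply (k : ℕ) (x : Fin r) : sgen r k (sgen r k x) = x := by
  rw [← Perm.mul_apply, sgen_mul_self, Perm.one_apply]

@[simp] lemma sgen_inv (k : ℕ) : (sgen r k)⁻¹ = sgen r k :=
  inv_eq_of_mul_eq_one_right (sgen_mul_self k)

lemma sgen_lt_sgen_iff {k : ℕ} (hk : k + 1 < r) {x y : Fin r}
    (hxy : ¬ (x = ⟨k, by omega⟩ ∧ y = ⟨k + 1, hk⟩))
    (hyx : ¬ (x = ⟨k + 1, hk⟩ ∧ y = ⟨k, by omega⟩)) :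
    sgen r k x < sgen r k y ↔ x < y := by
  simp only [Fin.ext_iff] at hxy hyx
  rw [Fin.lt_def, Fin.lt_def, sgen_apply_val hk, sgen_apply_val hk]
  split_ifs <;> omega

lemma permLen_one : permLen (1 : Perm (Fin r)) = 0 := by
  rw [permLen, card_eq_zero, filter_eq_empty_iff]
  exact fun p _ h => lt_asymm h.1 h.2

lemma permLen_inv_s13 (w : Perm (Fin r)) : permLen w⁻¹ = permLen w := by
  refine card_nbij' (fun p => (w⁻¹ p.2, w⁻¹ p.1)) (fun p => (w p.2, w p.1)) ?_ ?_ ?_ ?_ <;>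
    intro p hp <;> simp_all

/-- Transported along `s_k × s_k`, the inversions of `w * s_k` are those of `w` together with the
pair `(k + 1, k)`. -/
lemma permLen_mul_sgen_of_lt {k : ℕ} (hk : k + 1 < r) {w : Perm (Fin r)}
    (hw : w ⟨k, by omega⟩ < w ⟨k + 1, hk⟩) : permLen (w * sgen r k) = permLen w + 1 := by
  set a : Fin r := ⟨k, by omega⟩
  set b : Fin r := ⟨k + 1, hk⟩
  have hmap : (univ.filter fun p : Fin r × Fin r =>
        p.1 < p.2 ∧ (w * sgen r k) p.2 < (w * sgen r k) p.1).map
      (prodCongr (sgen r k) (sgen r k)).toEmbedding =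
      insert (b, a) (univ.filter fun p : Fin r × Fin r => p.1 < p.2 ∧ w p.2 < w p.1) := by
    ext ⟨x, y⟩
    rw [mem_map_equiv, mem_filter, mem_insert, mem_filter]
    simp only [mem_univ, true_and, Prod.mk.injEq, prodCongr_symm, prodCongr_apply, Prod.map,
      Perm.mul_apply, show (sgen r k).symm = sgen r k from sgen_inv k, sgen_apply_sgen_apply]
    by_cases hab : x = a ∧ y = b
    · obtain ⟨rfl, rfl⟩ := hab
      simp [a, b, sgen_apply_left hk, sgen_apply_right hk, hw.asymm]
    by_cases hba : x = b ∧ y = a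
    · obtain ⟨rfl, rfl⟩ := hba
      simp [a, b, sgen_apply_left hk, sgen_apply_right hk, hw]
    rw [sgen_lt_sgen_iff hk hab hba]
    tauto
  rw [permLen, permLen, ← card_map, hmap, card_insert_of_notMem]
  simp [a, b]

lemma permLen_mul_sgen_of_gt {k : ℕ} (hk : k + 1 < r) {w : Perm (Fin r)}
    (hw : w ⟨k + 1, hk⟩ < w ⟨k, by omega⟩) : permLen (w * sgen r k) + 1 = permLen w := by
  have h := permLen_mul_sgen_of_lt hk (w := w * sgen r k)
    (by simpa [sgen_apply_left hk, sgen_apply_right hk] using hw)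
  rwa [mul_assoc, sgen_mul_self, mul_one, eq_comm] at h

lemma permLen_sgen_mul_of_lt {k : ℕ} (hk : k + 1 < r) {w : Perm (Fin r)}
    (hw : w⁻¹ ⟨k, by omega⟩ < w⁻¹ ⟨k + 1, hk⟩) : permLen (sgen r k * w) = permLen w + 1 := by
  rw [← permLen_inv_s13, mul_inv_rev, sgen_inv, permLen_mul_sgen_of_lt hk hw, permLen_inv_s13]

lemma permLen_sgen_mul_of_gt {k : ℕ} (hk : k + 1 < r) {w : Perm (Fin r)}
    (hw : w⁻¹ ⟨k + 1, hk⟩ < w⁻¹ ⟨k, by omega⟩) : permLen (sgen r k * w) + 1 = permLen w := by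
  rw [← permLen_inv_s13, mul_inv_rev, sgen_inv, permLen_mul_sgen_of_gt hk hw, permLen_inv_s13]

lemma permLen_sgen {k : ℕ} (hk : k + 1 < r) : permLen (sgen r k) = 1 := by
  simpa [permLen_one] using permLen_mul_sgen_of_lt hk (w := 1) (by simp [Fin.lt_def])

lemma permLen_mul_sgen_eq_or {k : ℕ} (hk : k + 1 < r) (w : Perm (Fin r)) :
    permLen (w * sgen r k) = permLen w + 1 ∨ permLen (w * sgen r k) + 1 = permLen w := by
  rcases lt_or_gt_of_ne (w.injective.ne (a₁ := ⟨k, by omega⟩) (a₂ := ⟨k + 1, hk⟩) (by simp))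
    with h | h
  · exact .inl (permLen_mul_sgen_of_lt hk h)
  · exact .inr (permLen_mul_sgen_of_gt hk h)

lemma permLen_sgen_mul_le (k : ℕ) (w : Perm (Fin r)) :
    permLen (sgen r k * w) ≤ permLen w + 1 := by
  by_cases hk : k + 1 < r
  · rw [← permLen_inv_s13, mul_inv_rev, sgen_inv, ← permLen_inv_s13 w]
    rcases permLen_mul_sgen_eq_or hk w⁻¹ with h | h <;> omega
  · simp [sgen_of_not_lt hk]

lemma Equiv.Perm.eq_one_of_forall_lt_succ {w : Perm (Fin r)}
    (hw : ∀ k (hk : k + 1 < r), w ⟨k, by omega⟩ < w ⟨k + 1, hk⟩) : w = 1 := by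
  obtain _ | n := r
  · exact Subsingleton.elim _ _
  have hmono : StrictMono w := Fin.strictMono_iff_lt_succ.2 fun i => hw i (by omega)
  ext x
  exact congrArg (fun e : Fin (n + 1) ≃o Fin (n + 1) => (e x : ℕ))
    (Subsingleton.elim (hmono.orderIsoOfSurjective w w.surjective) (OrderIso.refl _))

lemma exists_permLen_sgen_mul_add_one_eq {w : Perm (Fin r)} (hw : w ≠ 1) :
    ∃ k, k + 1 < r ∧ permLen (sgen r k * w) + 1 = permLen w := by
  by_contra! h
  refine hw (inv_eq_one.1 (Perm.eq_one_of_forall_lt_succ fun k hk => ?_))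
  refine lt_of_le_of_ne (not_lt.1 fun hlt => h k hk (permLen_sgen_mul_of_gt hk hlt)) ?_
  simp

lemma le_of_forall_le_add_one {a : ℕ → ℕ} {m : ℕ} (h : ∀ i < m, a i ≤ a (i + 1)) {s t : ℕ}
    (hst : s ≤ t) (htm : t ≤ m) : a s ≤ a t :=
  monotoneOn_of_le_add_one Set.ordConnected_Iic (fun n _ _ hn => h n hn)
    (Set.mem_Iic.2 (hst.trans htm)) (Set.mem_Iic.2 htm) hst

lemma exists_lt_lt_of_forall_ne {a : ℕ → ℕ} {m y : ℕ} (h0 : a 0 ≤ y) (hm : y < a m)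
    (hne : ∀ t < m, a t ≠ y) : ∃ j < m, a j < y ∧ y < a (j + 1) := by
  have hex : ∃ t, y < a t := ⟨m, hm⟩
  obtain ⟨j, hj⟩ := Nat.exists_eq_add_one_of_ne_zero (n := Nat.find hex) fun h => by
    have := Nat.find_spec hex
    rw [h] at this
    omega
  have hjm : j < m := by
    have := Nat.find_min' hex hm
    omega
  exact ⟨j, hjm, lt_of_le_of_ne (not_lt.1 (Nat.find_min hex (by omega))) (hne j hjm),
    hj ▸ Nat.find_spec hex⟩

/-- `w_a` maps the `j`-th block of positions `[a_{j-1}, a_j)` increasingly onto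
`[r - a_j, r - a_{j-1})`; two consecutive values not separated by any `r - a_j` therefore come
from two consecutive positions strictly inside one block. -/
lemma exists_apply_eq_and_apply_add_one_eq {m : ℕ} {a : ℕ → ℕ} (ha0 : a 0 = 0) (ham : a m = r)
    (hmono : ∀ i < m, a i ≤ a (i + 1)) {wa : Perm (Fin r)}
    (hwa : ∀ i, 1 ≤ i → i ≤ m → ∀ l, 1 ≤ l → l ≤ a i - a (i - 1) →
      pApp wa (a (i - 1) + l - 1) = r - a i + l - 1)
    {n : ℕ} (hn : n + 1 < r) (hne : ∀ j, 1 ≤ j → j ≤ m → n + 1 ≠ r - a j) :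
    ∃ k, ∃ hk : k + 1 < r, wa ⟨k, by omega⟩ = ⟨n, by omega⟩ ∧ wa ⟨k + 1, hk⟩ = ⟨n + 1, hn⟩ ∧
      ∀ t ≤ m, a t ≠ k + 1 := by
  have har : ∀ t ≤ m, a t ≤ r := fun t ht => ham ▸ le_of_forall_le_add_one hmono ht le_rfl
  obtain ⟨j, hjm, hlo, hhi⟩ := exists_lt_lt_of_forall_ne (a := a) (m := m) (y := r - (n + 1))
    (by omega) (by omega) fun t ht h => by
      rcases Nat.eq_zero_or_pos t with rfl | ht0
      · omega
      · exact hne t ht0 ht.le (by have := har t ht.le; omega)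
  have hj := har (j + 1) hjm
  obtain ⟨l, hl⟩ : ∃ l, l = a (j + 1) + n + 1 - r := ⟨_, rfl⟩
  have hblock : ∀ l, 1 ≤ l → l ≤ a (j + 1) - a j →
      pApp wa (a j + l - 1) = r - a (j + 1) + l - 1 := by
    simpa using hwa (j + 1) (by omega) hjm
  refine ⟨a j + l - 1, by omega, Fin.ext ?_, Fin.ext ?_, fun t ht => ?_⟩
  · rw [← pApp_of_lt, hblock l (by omega) (by omega), Fin.val_mk]
    omega
  · rw [← pApp_of_lt, show a j + l - 1 + 1 = a j + (l + 1) - 1 by omega,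
      hblock (l + 1) (by omega) (by omega), Fin.val_mk]
    omega
  · rcases le_or_gt t j with htj | htj
    · have := le_of_forall_le_add_one hmono htj hjm.le
      omega
    · have := le_of_forall_le_add_one hmono (show j + 1 ≤ t from htj) ht
      omega

/-- `T (sgen r k)` is the paper's generator `T_{k+1}`. -/
structure IsHeckeBasis {R H : Type} [CommRing R] [Ring H] [Algebra R H] (q : Rˣ)
    (T : Perm (Fin r) → H) : Prop where
  one : T 1 = 1
  mul_sgen : ∀ (w : Perm (Fin r)) (i : ℕ), i + 1 < r →
    (permLen (sgen r i * w) = permLen w + 1 → T w * T (sgen r i) = T (sgen r i * w)) ∧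
    (permLen (sgen r i * w) < permLen w →
      T w * T (sgen r i) = (q : R) • T (sgen r i * w) + ((q : R) - 1) • T w)

namespace IsHeckeBasis

variable {R H : Type} [CommRing R] [Ring H] [Algebra R H] {q : Rˣ} {T : Perm (Fin r) → H}

lemma T_mul_T_sgen (hT : IsHeckeBasis q T) {k : ℕ} (hk : k + 1 < r) {w : Perm (Fin r)}
    (hw : w⁻¹ ⟨k, by omega⟩ < w⁻¹ ⟨k + 1, hk⟩) : T w * T (sgen r k) = T (sgen r k * w) :=
  (hT.mul_sgen w k hk).1 (permLen_sgen_mul_of_lt hk hw)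

lemma T_sgen_mul_self (hT : IsHeckeBasis q T) {k : ℕ} (hk : k + 1 < r) :
    T (sgen r k) * T (sgen r k) = (q : R) • 1 + ((q : R) - 1) • T (sgen r k) := by
  have h := (hT.mul_sgen (sgen r k) k hk).2
  rw [sgen_mul_self, permLen_one, permLen_sgen hk, hT.one] at h
  exact h one_pos

lemma commute_T_sgen (hT : IsHeckeBasis q T) {c d : ℕ} (hcd : c + 2 ≤ d) :
    Commute (T (sgen r c)) (T (sgen r d)) := by
  by_cases hd : d + 1 < r
  · have hc : c + 1 < r := by omega
    have hsc : sgen r c * sgen r d = sgen r d * sgen r c := by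
      ext x
      simp only [Perm.mul_apply, sgen_apply_val hc, sgen_apply_val hd]
      split_ifs <;> omega
    rw [Commute, SemiconjBy, hT.T_mul_T_sgen hd, hT.T_mul_T_sgen hc, hsc] <;>
      simp only [sgen_inv, Fin.lt_def, sgen_apply_val hc, sgen_apply_val hd] <;>
      split_ifs <;> omega
  · simp [sgen_of_not_lt hd, hT.one]

lemma T_sgen_braid (hT : IsHeckeBasis q T) {k : ℕ} (hk : k + 2 < r) :
    T (sgen r k) * T (sgen r (k + 1)) * T (sgen r k) =
      T (sgen r (k + 1)) * T (sgen r k) * T (sgen r (k + 1)) := by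
  have hk1 : k + 1 < r := by omega
  have hperm : sgen r k * (sgen r (k + 1) * sgen r k) =
      sgen r (k + 1) * (sgen r k * sgen r (k + 1)) := by
    ext x
    simp only [Perm.mul_apply]
    by_cases h0 : (x : ℕ) = k <;> by_cases h1 : (x : ℕ) = k + 1 <;>
      simp [sgen_apply_val hk1, sgen_apply_val hk, h0, h1] <;> split_ifs <;> omega
  rw [hT.T_mul_T_sgen hk, hT.T_mul_T_sgen hk1, hT.T_mul_T_sgen hk1, hT.T_mul_T_sgen hk, hperm] <;>
    simp only [mul_inv_rev, sgen_inv, Perm.mul_apply, Fin.lt_def, sgen_apply_val hk1,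
      sgen_apply_val hk] <;>
    split_ifs <;> omega

/-- By induction on the length, splitting `T w = T v * T (sgen r j)` along a descent of `w`. -/
lemma T_sgen_mul_T (hT : IsHeckeBasis q T) {k : ℕ} (hk : k + 1 < r) {w : Perm (Fin r)}
    (hw : permLen (w * sgen r k) = permLen w + 1) : T (sgen r k) * T w = T (w * sgen r k) := by
  induction hn : permLen w generalizing w with
  | zero =>
    obtain rfl : w = 1 := by
      by_contra hw1
      obtain ⟨j, -, hj⟩ := exists_permLen_sgen_mul_add_one_eq hw1
      omega
    rw [hT.one, mul_one, one_mul]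
  | succ n ih =>
    obtain ⟨j, hj, hwj⟩ := exists_permLen_sgen_mul_add_one_eq (w := w) (by
      rintro rfl; simp [permLen_one] at hn)
    set v := sgen r j * w
    have hvw : sgen r j * v = w := by simp [v, ← mul_assoc]
    have hTw : T v * T (sgen r j) = T w := by
      rw [(hT.mul_sgen v j hj).1 (by rw [hvw]; omega), hvw]
    have hvk : permLen (v * sgen r k) = permLen v + 1 := by
      have hle := permLen_sgen_mul_le j (v * sgen r k)
      rw [← mul_assoc, hvw] at hle
      rcases permLen_mul_sgen_eq_or hk v with h | h <;> omega
    have hTvk : T (v * sgen r k) * T (sgen r j) = T (w * sgen r k) := by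
      rw [(hT.mul_sgen _ j hj).1 (by rw [← mul_assoc, hvw]; omega), ← mul_assoc, hvw]
    rw [← hTw, ← mul_assoc, ih hvk (by omega), hTvk]

lemma T_mul_T_sgen_eq_T_sgen_mul_T (hT : IsHeckeBasis q T) {w : Perm (Fin r)} {k n : ℕ}
    (hk : k + 1 < r) (hn : n + 1 < r) (hwk : w ⟨k, by omega⟩ = ⟨n, by omega⟩)
    (hwk1 : w ⟨k + 1, hk⟩ = ⟨n + 1, hn⟩) : T w * T (sgen r n) = T (sgen r k) * T w := by
  have hconj : sgen r n * w = w * sgen r k := by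
    rw [sgen_eq_swap hn, sgen_eq_swap hk, ← hwk, ← hwk1, swap_apply_apply, inv_mul_cancel_right]
  have hlt : w ⟨k, by omega⟩ < w ⟨k + 1, hk⟩ := by simp [hwk, hwk1, Fin.lt_def]
  rw [hT.T_mul_T_sgen hn (by simp [← hwk, ← hwk1, Fin.lt_def]), hconj,
    hT.T_sgen_mul_T hk (permLen_mul_sgen_of_lt hk hlt)]

end IsHeckeBasis

structure IsJucysMurphy {R H : Type} [CommRing R] [Ring H] [Algebra R H] (q : Rˣ)
    (T : Perm (Fin r) → H) (T0 : H) (L : ℕ → H) : Prop extends IsHeckeBasis q T where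
  braid_zero : T0 * T (sgen r 0) * T0 * T (sgen r 0) = T (sgen r 0) * T0 * T (sgen r 0) * T0
  commute_zero : ∀ i, 2 ≤ i → i ≤ r - 1 → T0 * T (sgen r (i - 1)) = T (sgen r (i - 1)) * T0
  L_one : L 1 = T0
  L_rec : ∀ i, 2 ≤ i →
    L i = ((q⁻¹ : Rˣ) : R) • (T (sgen r (i - 2)) * L (i - 1) * T (sgen r (i - 2)))

lemma piaE_add {R H : Type} [CommRing R] [Ring H] [Algebra R H] (L : ℕ → H) (x : R) (c d : ℕ) :
    piaE R H L x (c + d) =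
      piaE R H L x c * ((List.range d).map fun j => L (c + j + 1) - algebraMap R H x).prod := by
  rw [piaE, List.range_add, List.map_append, List.prod_append, List.map_map]
  rfl

namespace IsJucysMurphy

variable {R H : Type} [CommRing R] [Ring H] [Algebra R H] {q : Rˣ} {T : Perm (Fin r) → H}
  {T0 : H} {L : ℕ → H}

lemma L_add_two (hL : IsJucysMurphy q T T0 L) (k : ℕ) :
    L (k + 2) = q⁻¹ • (T (sgen r k) * L (k + 1) * T (sgen r k)) := by
  simpa [Units.smul_def] using hL.L_rec (k + 2) (by omega)

lemma commute_T_sgen_L_of_le (hL : IsJucysMurphy q T T0 L) {j k : ℕ} (hj : 1 ≤ j)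
    (hjk : j ≤ k) : Commute (T (sgen r k)) (L j) := by
  induction j, hj using Nat.le_induction with
  | base =>
    rw [hL.L_one]
    by_cases hk : k + 1 < r
    · have h := hL.commute_zero (k + 1) (by omega) (by omega)
      rw [Nat.add_sub_cancel] at h
      exact Commute.symm h
    · simp [sgen_of_not_lt hk, hL.one]
  | succ j hj ih =>
    rw [show j + 1 = j - 1 + 2 by omega, hL.L_add_two, Commute.smul_right_iff]
    have hs := (hL.commute_T_sgen (show j - 1 + 2 ≤ k by omega)).symm
    have hLj : Commute (T (sgen r k)) (L (j - 1 + 1)) := by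
      rw [Nat.sub_add_cancel hj]
      exact ih (by omega)
    exact (hs.mul_right hLj).mul_right hs

lemma commute_T_sgen_L_of_add_three_le (hL : IsJucysMurphy q T T0 L) {j k : ℕ}
    (hkj : k + 3 ≤ j) (hjr : j ≤ r) : Commute (T (sgen r k)) (L j) := by
  induction j, hkj using Nat.le_induction with
  | base =>
    set s := T (sgen r k)
    set t := T (sgen r (k + 1))
    set A := L (k + 1)
    have hsts : s * t * s = t * s * t := hL.T_sgen_braid (by omega)
    have htA : t * A = A * t := hL.commute_T_sgen_L_of_le (by omega) le_rfl
    rw [hL.L_add_two (k + 1), hL.L_add_two k]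
    simp only [mul_smul_comm, smul_mul_assoc, Commute.smul_right_iff]
    calc s * (t * (s * A * s) * t) = s * t * s * A * s * t := by simp only [mul_assoc]
      _ = t * s * (t * A) * s * t := by rw [hsts]; simp only [mul_assoc]
      _ = t * s * A * (t * s * t) := by rw [htA]; simp only [mul_assoc]
      _ = t * (s * A * s) * t * s := by rw [← hsts]; simp only [mul_assoc]
  | succ j hj ih =>
    rw [show j + 1 = j - 1 + 2 by omega, hL.L_add_two, Commute.smul_right_iff]
    have hs := hL.commute_T_sgen (show k + 2 ≤ j - 1 by omega)
    have hLj : Commute (T (sgen r k)) (L (j - 1 + 1)) := by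
      rw [Nat.sub_add_cancel (by omega)]
      exact ih (by omega)
    exact (hs.mul_right hLj).mul_right hs

lemma commute_L_add_one_L_add_two (hL : IsJucysMurphy q T T0 L) {k : ℕ} (hk : k + 2 ≤ r) :
    Commute (L (k + 1)) (L (k + 2)) := by
  induction k with
  | zero =>
    rw [hL.L_add_two, Commute.smul_right_iff, hL.L_one]
    simpa only [Commute, SemiconjBy, mul_assoc] using hL.braid_zero
  | succ p ih =>
    have hs : Commute (T (sgen r p)) (L (p + 3)) :=
      hL.commute_T_sgen_L_of_add_three_le le_rfl hk
    have ht : Commute (L (p + 1)) (T (sgen r (p + 1))) :=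
      (hL.commute_T_sgen_L_of_le (by omega) (by omega)).symm
    have hA : Commute (L (p + 1)) (L (p + 3)) := by
      rw [hL.L_add_two (p + 1), Commute.smul_right_iff]
      exact (ht.mul_right (ih (by omega))).mul_right ht
    rw [hL.L_add_two p, Commute.smul_left_iff]
    exact (hs.mul_left hA).mul_left hs

lemma commute_T_sgen_L_mul_L (hL : IsJucysMurphy q T T0 L) {k : ℕ} (hk : k + 2 ≤ r) :
    Commute (T (sgen r k)) (L (k + 1) * L (k + 2)) := by
  have hE := hL.commute_L_add_one_L_add_two hk
  rw [hL.L_add_two, Commute.smul_right_iff] at hE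
  rw [hL.L_add_two, mul_smul_comm, Commute.smul_right_iff]
  set s := T (sgen r k)
  set A := L (k + 1)
  calc s * (A * (s * A * s)) = s * A * s * A * s := by simp only [mul_assoc]
    _ = A * (s * A * s) * s := by rw [hE.eq]

/-- The quadratic relation `T_{k+1}² = q + (q - 1) T_{k+1}` makes both products equal to
`T_{k+1} L_{k+1} + L_{k+1} T_{k+1} + (1 - q⁻¹) T_{k+1} L_{k+1} T_{k+1}`. -/
lemma commute_T_sgen_L_add_L (hL : IsJucysMurphy q T T0 L) {k : ℕ} (hk : k + 1 < r) :
    Commute (T (sgen r k)) (L (k + 1) + L (k + 2)) := by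
  have hq := hL.T_sgen_mul_self hk
  rw [hL.L_add_two]
  set s := T (sgen r k)
  set A := L (k + 1)
  have hleft : s * (s * A * s) = (s * s) * A * s := by simp only [mul_assoc]
  have hright : s * A * s * s = s * A * (s * s) := by simp only [mul_assoc]
  rw [Commute, SemiconjBy, mul_add, add_mul, mul_smul_comm, smul_mul_assoc, hleft, hright, hq]
  simp only [add_mul, mul_add, smul_mul_assoc, mul_smul_comm, one_mul, mul_one, smul_add,
    Units.smul_def, smul_smul, Units.inv_mul, one_smul]
  abel

lemma commute_T_sgen_piaE_of_le (hL : IsJucysMurphy q T T0 L) (x : R) {k b : ℕ} (hbk : b ≤ k) :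
    Commute (T (sgen r k)) (piaE R H L x b) := by
  refine Commute.list_prod_right _ _ fun y hy => ?_
  obtain ⟨j, hj, rfl⟩ := List.mem_map.1 hy
  rw [List.mem_range] at hj
  exact (hL.commute_T_sgen_L_of_le (by omega) (by omega)).sub_right
    (Algebra.commute_algebraMap_right x _)

/-- The factors `L_{k+1} - x` and `L_{k+2} - x` do not commute with `T_{k+1}` separately, but
their product does. -/
lemma commute_T_sgen_piaE (hL : IsJucysMurphy q T T0 L) (x : R) {k b : ℕ} (hbr : b ≤ r)
    (hbk : b ≠ k + 1) : Commute (T (sgen r k)) (piaE R H L x b) := by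
  rcases le_or_gt b k with hb | hb
  · exact hL.commute_T_sgen_piaE_of_le x hb
  obtain ⟨d, rfl⟩ : ∃ d, b = k + 2 + d := ⟨b - (k + 2), by omega⟩
  rw [piaE_add, piaE_add]
  refine ((hL.commute_T_sgen_piaE_of_le x le_rfl).mul_right ?_).mul_right ?_
  · have hpair : ((List.range 2).map fun j => L (k + j + 1) - algebraMap R H x).prod =
        L (k + 1) * L (k + 2) - x • (L (k + 1) + L (k + 2)) + (x * x) • 1 := by
      have hc : L (k + 1) * algebraMap R H x = algebraMap R H x * L (k + 1) :=
        (Algebra.commutes x _).symm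
      simp [List.range_succ, sub_mul, mul_sub, Algebra.smul_def, mul_add, hc, add_assoc]
      abel
    rw [hpair]
    exact ((hL.commute_T_sgen_L_mul_L (by omega)).sub_right
      ((hL.commute_T_sgen_L_add_L (by omega)).smul_right x)).add_right
      ((Commute.one_right _).smul_right _)
  · refine Commute.list_prod_right _ _ fun y hy => ?_
    obtain ⟨j, hj, rfl⟩ := List.mem_map.1 hy
    rw [List.mem_range] at hj
    exact (hL.commute_T_sgen_L_of_add_three_le (by omega) (by omega)).sub_right
      (Algebra.commute_algebraMap_right x _)

lemma commute_T_sgen_prod_piaE (hL : IsJucysMurphy q T T0 L) (x : ℕ → R) (m : ℕ)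
    (a : ℕ → ℕ) {k : ℕ} (ha : ∀ t, 1 ≤ t → t < m → a t ≤ r ∧ a t ≠ k + 1) :
    Commute (T (sgen r k))
      ((List.range (m - 1)).map fun i => piaE R H L (x i) (a (i + 1))).prod := by
  refine Commute.list_prod_right _ _ fun y hy => ?_
  obtain ⟨t, ht, rfl⟩ := List.mem_map.1 hy
  rw [List.mem_range] at ht
  obtain ⟨hr, hk⟩ := ha (t + 1) (by omega) (by omega)
  exact hL.commute_T_sgen_piaE _ hr hk

end IsJucysMurphy

theorem stmt13_general (R : Type) [CommRing R] (H : Type) [Ring H] [Algebra R H]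
    (m r : ℕ) (q : Rˣ) (u : ℕ → R)
    (T : Equiv.Perm (Fin r) → H) (T0 : H) (Lm : ℕ → H)
    (hT1 : T 1 = 1)
    (hTmul : ∀ (w : Equiv.Perm (Fin r)) (i : ℕ), i + 1 < r →
      (permLen (sgen r i * w) = permLen w + 1 →
        T w * T (sgen r i) = T (sgen r i * w)) ∧
      (permLen (sgen r i * w) < permLen w →
        T w * T (sgen r i) = (q : R) • T (sgen r i * w) + ((q : R) - 1) • T w))
    (hbraid0 : T0 * T (sgen r 0) * T0 * T (sgen r 0)
      = T (sgen r 0) * T0 * T (sgen r 0) * T0)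
    (hcomm0 : ∀ i, 2 ≤ i → i ≤ r - 1 →
      T0 * T (sgen r (i - 1)) = T (sgen r (i - 1)) * T0)
    (hL1 : Lm 1 = T0)
    (hLrec : ∀ i, 2 ≤ i →
      Lm i = (((q⁻¹ : Rˣ)) : R) • (T (sgen r (i - 2)) * Lm (i - 1) * T (sgen r (i - 2))))
    (a : ℕ → ℕ) (ha0 : a 0 = 0) (ham : a m = r)
    (hmono : ∀ i, i < m → a i ≤ a (i + 1))
    (wa : Equiv.Perm (Fin r))
    (hwa : ∀ i, 1 ≤ i → i ≤ m → ∀ l, 1 ≤ l → l ≤ a i - a (i - 1) →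
      pApp wa (a (i - 1) + l - 1) = r - a i + l - 1) :
    ∀ i, 1 ≤ i → i ≤ r - 1 → (∀ j, 1 ≤ j → j ≤ m → i ≠ r - a j) →
      vSeq R H u Lm T m a wa * T (sgen r (i - 1)) =
        T (sgen r (pApp wa⁻¹ (i - 1))) * vSeq R H u Lm T m a wa := by
  intro i hi1 hi2 hie
  have hL : IsJucysMurphy q T T0 Lm := ⟨⟨hT1, hTmul⟩, hbraid0, hcomm0, hL1, hLrec⟩
  obtain ⟨n, rfl⟩ : ∃ n, i = n + 1 := ⟨i - 1, by omega⟩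
  obtain ⟨k, hk, hwk, hwk1, hak⟩ :=
    exists_apply_eq_and_apply_add_one_eq ha0 ham hmono hwa (n := n) (by omega) hie
  have hinv : pApp wa⁻¹ n = k := by
    rw [pApp_of_lt _ (by omega), ← hwk]
    simp
  have hT : T wa * T (sgen r n) = T (sgen r k) * T wa :=
    hL.T_mul_T_sgen_eq_T_sgen_mul_T hk (by omega) hwk hwk1
  have hπ : Commute (T (sgen r k)) (piSeq R H u Lm m a) :=
    hL.commute_T_sgen_prod_piaE _ m a fun t _ htm =>
      ⟨ham ▸ le_of_forall_le_add_one hmono htm.le le_rfl, hak t htm.le⟩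
  have hπ' : Commute (T (sgen r n)) (piTildeSeq R H u Lm m fun j => r - a (m - j)) :=
    hL.commute_T_sgen_prod_piaE _ m _ fun t _ htm =>
      ⟨Nat.sub_le _ _, (hie (m - t) (by omega) (by omega)).symm⟩
  rw [Nat.add_sub_cancel, hinv, vSeq, mul_assoc _ _ (T _), ← hπ'.eq, ← mul_assoc,
    mul_assoc (piSeq R H u Lm m a), hT, ← mul_assoc, ← hπ.eq]
  simp only [mul_assoc]

/-- (3.4b): `v_a T_i = T_{(i)w_a⁻¹} v_a` whenever
`i ≠ r - a_j` for all `j`.  Generators are 1-indexed as in the paper: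
`T_i = T_{s_i}` corresponds to `T (sgen r (i-1))`. -/
theorem stmt13 (R : Type) [CommRing R] (H : Type) [Ring H] [Algebra R H]
    (m r : ℕ) (hm : 0 < m) (q : Rˣ) (u : ℕ → R)
    (T : Equiv.Perm (Fin r) → H) (T0 : H) (Lm : ℕ → H)
    (hT1 : T 1 = 1)
    (hTmul : ∀ (w : Equiv.Perm (Fin r)) (i : ℕ), i + 1 < r →
      (permLen (sgen r i * w) = permLen w + 1 →
        T w * T (sgen r i) = T (sgen r i * w)) ∧
      (permLen (sgen r i * w) < permLen w →
        T w * T (sgen r i) = (q : R) • T (sgen r i * w) + ((q : R) - 1) • T w))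
    (hcyclo : ((List.range m).map (fun i => T0 - algebraMap R H (u (i + 1)))).prod = 0)
    (hbraid0 : T0 * T (sgen r 0) * T0 * T (sgen r 0)
      = T (sgen r 0) * T0 * T (sgen r 0) * T0)
    (hcomm0 : ∀ i, 2 ≤ i → i ≤ r - 1 →
      T0 * T (sgen r (i - 1)) = T (sgen r (i - 1)) * T0)
    (hL1 : Lm 1 = T0)
    (hLrec : ∀ i, 2 ≤ i →
      Lm i = (((q⁻¹ : Rˣ)) : R) • (T (sgen r (i - 2)) * Lm (i - 1) * T (sgen r (i - 2))))
    (a : ℕ → ℕ) (ha0 : a 0 = 0) (ham : a m = r)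
    (hmono : ∀ i, i < m → a i ≤ a (i + 1))
    (wa : Equiv.Perm (Fin r))
    (hwa : ∀ i, 1 ≤ i → i ≤ m → ∀ l, 1 ≤ l → l ≤ a i - a (i - 1) →
      pApp wa (a (i - 1) + l - 1) = r - a i + l - 1) :
    ∀ i, 1 ≤ i → i ≤ r - 1 → (∀ j, 1 ≤ j → j ≤ m → i ≠ r - a j) →
      vSeq R H u Lm T m a wa * T (sgen r (i - 1)) =
        T (sgen r (pApp wa⁻¹ (i - 1))) * vSeq R H u Lm T m a wa :=
  stmt13_general R H m r q u T T0 Lm hT1 hTmul hbraid0 hcomm0 hL1 hLrec a ha0 ham hmono wa hwa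
end
end

section
/- Let a = [a_0,...,a_m] ∈ Λ[m,r] (so 0 = a_0 ≤ ⋯ ≤ a_m = r), define a' = [0, r-a_{m-1}, ..., r-a_1, r], a_∂ = [a_0,...,a_{j-1}, r-1,...,r-1] where j is minimal with a_j = r, and a_i = a_∂ + 1_i where 1_i = [0,...,0,1,...,1] with the 1's starting at position i. Then (a')_∂ determines c with c_∂ = (a_∂)' and one has the duality relation (c_i)' = a_{m-i+1} for each i = 1,...,m, where for b = [b_0,...,b_m] ∈ Λ[m,r-1] or Λ[m,r] the prime operation is b' = [0, N-b_{m-1},...,N-b_1, N] with N = b_m. -/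
noncomputable section

/-- combinatorics of the operations `'`, `∂` and `+1_i` on
`Λ[m,r]`.  A sequence `a ∈ Λ[m,r]` is encoded as a weakly increasing function
`a : ℕ → ℕ` with `a 0 = 0` and `a m = r`.  Then `a_∂ k = min (a k) (r-1)`,
`1_i k = if i ≤ k then 1 else 0`, and for `b ∈ Λ[m,N]` the dual is
`b' k = N - b (m - k)`.  If `c ∈ Λ[m,r]` satisfies `c_∂ = (a_∂)'`, then
`(c_i)' = a_{m-i+1}` for each `i = 1, …, m`. -/
theorem stmt19 (m r : ℕ) (hm : 1 ≤ m) (hr : 1 ≤ r)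
    (a : ℕ → ℕ) (ha0 : a 0 = 0) (ham : a m = r)
    (hamono : ∀ i, i < m → a i ≤ a (i + 1))
    (c : ℕ → ℕ) (hc0 : c 0 = 0) (hcm : c m = r)
    (hcmono : ∀ i, i < m → c i ≤ c (i + 1))
    (hcd : ∀ k, k ≤ m →
      min (c k) (r - 1) = (r - 1) - min (a (m - k)) (r - 1)) :
    ∀ i, 1 ≤ i → i ≤ m → ∀ k, k ≤ m →
      r - (min (c (m - k)) (r - 1) + (if i ≤ m - k then 1 else 0)) =
        min (a k) (r - 1) + (if m - i + 1 ≤ k then 1 else 0) := by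
  intro i hi1 him k hk
  have hmk : m - (m - k) = k := by omega
  have hd := hcd (m - k) (by omega)
  rw [hmk] at hd
  have hA : min (a k) (r - 1) ≤ r - 1 := min_le_right _ _
  rw [hd]
  by_cases h : i ≤ m - k
  · simp only [if_pos h, if_neg (show ¬(m - i + 1 ≤ k) by omega)]
    omega
  · simp only [if_neg h, if_pos (show m - i + 1 ≤ k by omega)]
    omega
end
end
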